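/- arXiv:math/0611510 — 4 statements merged into one kernel-verified Lean document; each statement's English description precedes it below -/
import Mathlib

section
/- Let σ = (Z, P) be a stability condition on a triangulated category D. For every φ ∈ ℝ, the full additive subcategory P(φ) ⊆ D is an abelian category. -/
/-!
Basic definitions: Bridgeland stability conditions on a triangulated category.

The Grothendieck group `K(D)` is encoded implicitly: a group homomorphism `K(D) → ℂ`
is the same thing as a function on objects which is invariant under isomorphism and
additive on distinguished triangles.
-/

open CategoryTheory CategoryTheory.Limits CategoryTheory.Pretriangulated
open scoped ENNReal Classical

universe v u

variable (C : Type u) [Category.{v} C] [HasZeroObject C] [HasShift C ℤ]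
  [Preadditive C] [∀ n : ℤ, (CategoryTheory.shiftFunctor C n).Additive] [Pretriangulated C]

/-- A Harder–Narasimhan filtration of an object `E` with respect to a collection of
subcategories `P φ`: a finite sequence of triangles `E_{j-1} → E_j → A_j` with `E₀ = 0`,
`E_n = E`, and `A_j` a nonzero object of `P φ_j`, where `φ₁ > φ₂ > ⋯ > φ_n`. -/
structure HNFiltration (P : ℝ → Set C) (E : C) where
  n : ℕ
  npos : 0 < n
  phase : Fin n → ℝ
  phase_anti : ∀ ⦃i j : Fin n⦄, i < j → phase j < phase i
  obj : Fin (n + 1) → C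
  obj_zero : IsZero (obj 0)
  obj_last : obj (Fin.last n) = E
  A : Fin n → C
  A_mem : ∀ j, A j ∈ P (phase j)
  A_nonzero : ∀ j, ¬ IsZero (A j)
  map : ∀ j : Fin n, obj j.castSucc ⟶ obj j.succ
  distinguished : ∀ j : Fin n,
    ∃ (g : obj j.succ ⟶ A j) (h : A j ⟶ (obj j.castSucc)⟦(1 : ℤ)⟧),
      Triangle.mk (map j) g h ∈ distTriang C

/-- A stability condition `σ = (Z, P)` on a triangulated category, in the sense of
Bridgeland.  `Z` is the central charge (a group homomorphism `K(D) → ℂ`, encoded as an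
isomorphism-invariant function on objects additive on distinguished triangles), and the
`P φ` are strictly full additive subcategories (encoded by their classes of objects,
closed under isomorphism and containing the zero objects), satisfying axioms (a)-(d). -/
structure StabilityCondition where
  Z : C → ℂ
  P : ℝ → Set C
  Z_iso_invariant : ∀ ⦃X Y : C⦄, (X ≅ Y) → Z X = Z Y
  Z_additive : ∀ T ∈ distTriang C, Z (Triangle.obj₂ T) = Z T.obj₁ + Z T.obj₃
  P_isoClosed : ∀ (φ : ℝ) ⦃X Y : C⦄, (X ≅ Y) → X ∈ P φ → Y ∈ P φ
  P_zero_mem : ∀ (φ : ℝ) (Z₀ : C), IsZero Z₀ → Z₀ ∈ P φ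
  P_phase : ∀ (φ : ℝ) (E : C), E ∈ P φ → ¬ IsZero E →
    ∃ m : ℝ, 0 < m ∧ Z E = (m : ℂ) * Complex.exp ((Real.pi * φ : ℝ) * Complex.I)
  P_shift : ∀ (φ : ℝ) (E : C), E ∈ P (φ + 1) ↔ ∃ F ∈ P φ, Nonempty (E ≅ F⟦(1 : ℤ)⟧)
  hom_vanishing : ∀ ⦃φ₁ φ₂ : ℝ⦄, φ₂ < φ₁ → ∀ ⦃A₁ A₂ : C⦄, A₁ ∈ P φ₁ → A₂ ∈ P φ₂ →
    ∀ f : A₁ ⟶ A₂, f = 0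
  HN : ∀ E : C, ¬ IsZero E → Nonempty (HNFiltration C P E)

namespace StabilityCondition

variable {C}

/-- The largest phase `φ⁺_σ(E)` occurring in the HN filtration of a nonzero object `E`
(junk value `0` on zero objects). -/
noncomputable def phiPlus (σ : StabilityCondition C) (E : C) : ℝ :=
  if h : ¬ IsZero E then (σ.HN E h).some.phase ⟨0, (σ.HN E h).some.npos⟩ else 0

/-- The smallest phase `φ⁻_σ(E)` occurring in the HN filtration of a nonzero object `E`
(junk value `0` on zero objects). -/
noncomputable def phiMinus (σ : StabilityCondition C) (E : C) : ℝ :=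
  if h : ¬ IsZero E then
    (σ.HN E h).some.phase ⟨(σ.HN E h).some.n - 1, Nat.sub_lt (σ.HN E h).some.npos one_pos⟩
  else 0

/-- The mass `m_σ(E) = ∑ᵢ |Z(Aᵢ)|` of a nonzero object `E`, where the `Aᵢ` are its
HN factors (junk value `0` on zero objects). -/
noncomputable def mass (σ : StabilityCondition C) (E : C) : ℝ :=
  if h : ¬ IsZero E then ∑ j, ‖σ.Z ((σ.HN E h).some.A j)‖ else 0

/-- The generalized ([0,∞]-valued) metric on stability conditions:
`d(σ₁,σ₂) = sup_{0 ≠ E} max ( |φ⁻₂(E) − φ⁻₁(E)|, |φ⁺₂(E) − φ⁺₁(E)|, |log (m₂(E)/m₁(E))| )`. -/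
noncomputable def stabDist (σ τ : StabilityCondition C) : ℝ≥0∞ :=
  ⨆ E : {E : C // ¬ IsZero E},
    ENNReal.ofReal (max |τ.phiMinus E.1 - σ.phiMinus E.1|
      (max |τ.phiPlus E.1 - σ.phiPlus E.1| |Real.log (τ.mass E.1 / σ.mass E.1)|))

end StabilityCondition

/-- The smallest extension-closed (strictly) full subcategory of `D` containing a given
class `S` of objects: closed under isomorphisms, containing zero, and closed under
extensions (distinguished triangles). -/
inductive ExtClosure (S : Set C) : C → Prop
  | of {E : C} (hE : E ∈ S) : ExtClosure S E
  | zero {E : C} (hE : IsZero E) : ExtClosure S E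
  | iso {E F : C} (e : E ≅ F) (hE : ExtClosure S E) : ExtClosure S F
  | ext (T : Triangle C) (hT : T ∈ distTriang C) (h₁ : ExtClosure S T.obj₁)
      (h₃ : ExtClosure S T.obj₃) : ExtClosure S T.obj₂

/-- `P(I)`: the smallest extension-closed full subcategory of `D` containing the
subcategories `P φ` for `φ ∈ I`. -/
def PInterval (σ : StabilityCondition C) (I : Set ℝ) : Set C :=
  {E | ExtClosure C {F | ∃ φ ∈ I, F ∈ σ.P φ} E}

/-- `A` is a proper strict subobject of `E` in the quasi-abelian full subcategory with
class of objects `S`: there is a distinguished triangle `A → E → B` with all vertices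
in `S` and `B` nonzero. -/
def ProperStrictSub (S : Set C) (A E : C) : Prop :=
  A ∈ S ∧ E ∈ S ∧ ∃ (B : C) (f : A ⟶ E) (g : E ⟶ B) (h : B ⟶ A⟦(1 : ℤ)⟧),
    B ∈ S ∧ ¬ IsZero B ∧ Triangle.mk f g h ∈ distTriang C

/-- `B` is a proper strict quotient of `E` in the quasi-abelian full subcategory with
class of objects `S`. -/
def ProperStrictQuot (S : Set C) (B E : C) : Prop :=
  B ∈ S ∧ E ∈ S ∧ ∃ (A : C) (f : A ⟶ E) (g : E ⟶ B) (h : B ⟶ A⟦(1 : ℤ)⟧),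
    A ∈ S ∧ ¬ IsZero A ∧ Triangle.mk f g h ∈ distTriang C

/-- A full subcategory (given by a class `S` of objects) is of finite length if it
satisfies both chain conditions on strict subobjects: the proper strict subobject
relation and the proper strict quotient relation are well-founded (DCC and ACC). -/
def FiniteLengthQuasiAbelian (S : Set C) : Prop :=
  WellFounded (fun A E => ProperStrictSub C S A E) ∧
  WellFounded (fun B E => ProperStrictQuot C S B E)

/-- A stability condition is locally finite if for some `ε > 0` each of the
quasi-abelian categories `P((φ−ε, φ+ε))` is of finite length. -/
def StabilityCondition.LocallyFinite (σ : StabilityCondition C) : Prop :=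
  ∃ ε : ℝ, 0 < ε ∧ ∀ φ : ℝ,
    FiniteLengthQuasiAbelian C (PInterval C σ (Set.Ioo (φ - ε) (φ + ε)))

/-- The space `Stab(D)` of locally finite stability conditions on `D`. -/
def Stab := {σ : StabilityCondition C // σ.LocallyFinite C}

/-- The topology on `Stab(D)` induced by the generalized metric `d`: generated by the
open balls. -/
noncomputable instance : TopologicalSpace (Stab C) :=
  TopologicalSpace.generateFrom
    {U : Set (Stab C) | ∃ (σ : Stab C) (ε : ℝ≥0∞), 0 < ε ∧
      U = {τ : Stab C | StabilityCondition.stabDist σ.1 τ.1 < ε}}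

/-- The heart `P((0,1])` of a stability condition. -/
def heartSet (σ : StabilityCondition C) : Set C :=
  PInterval C σ (Set.Ioc (0 : ℝ) 1)

/-!
Complete a morphism `f : X ⟶ Y` of `P(φ)` to a distinguished triangle `X ⟶ Y ⟶ Z ⟶ X⟦1⟧`.
Hom-vanishing confines the HN phases of `Z` to `[φ, φ + 1]`. After rotating by `e^{-iπφ}`,
the central charges of the HN factors of `Z` lie in the closed upper half plane and add up to
`Z(Y) - Z(X)`, which is real; so every factor has phase `φ` or `φ + 1`, and `Z` is an extension
of some `Q ∈ P(φ)` by `K⟦1⟧` with `K ∈ P(φ)`. Since moreover there are no nonzero maps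
`X ⟶ Y⟦n⟧` for `n < 0` between objects of `P(φ)`, the criterion of Beilinson–Bernstein–Deligne
(`K` is a kernel and `Q` a cokernel of `f`) shows that `P(φ)` is abelian.
-/

open ZeroObject

section

variable {C}

lemma CategoryTheory.Pretriangulated.Triangle.hom_obj₂_eq_zero {T : Triangle C}
    (hT : T ∈ distTriang C) {X : C} (h₁ : ∀ u : X ⟶ T.obj₁, u = 0)
    (h₃ : ∀ u : X ⟶ T.obj₃, u = 0) (u : X ⟶ T.obj₂) : u = 0 := by
  obtain ⟨v, rfl⟩ := T.coyoneda_exact₂ hT u (h₃ _)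
  rw [h₁ v, zero_comp]

lemma CategoryTheory.Pretriangulated.Triangle.obj₂_hom_eq_zero {T : Triangle C}
    (hT : T ∈ distTriang C) {X : C} (h₁ : ∀ u : T.obj₁ ⟶ X, u = 0)
    (h₃ : ∀ u : T.obj₃ ⟶ X, u = 0) (u : T.obj₂ ⟶ X) : u = 0 := by
  obtain ⟨v, rfl⟩ := T.yoneda_exact₂ hT u (h₁ _)
  rw [h₃ v, comp_zero]

end

namespace CategoryTheory.Triangulated.AbelianSubcategory

variable {C} {A : Type*} [Category* A] [Preadditive A] {ι : A ⥤ C} [ι.Full] [ι.Faithful]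
  (hι : ∀ ⦃X Y : A⦄ ⦃n : ℤ⦄ (f : ι.obj X ⟶ (ι.obj Y)⟦n⟧), n < 0 → f = 0)
  (hA : admissibleMorphism ι = ⊤)

include hι hA

lemma exists_distinguished_triangle_of_mono {X₁ X₂ : A} (i : X₁ ⟶ X₂) [Mono i] :
    ∃ (X₃ : A) (π : X₂ ⟶ X₃) (δ : ι.obj X₃ ⟶ (ι.obj X₁)⟦(1 : ℤ)⟧),
      Triangle.mk (ι.map i) (ι.map π) δ ∈ distTriang C := by
  obtain ⟨X₃, f₂, f₃, hT⟩ := distinguished_cocone_triangle (ι.map i)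
  obtain ⟨K, Q, α, β, γ, hT'⟩ := (hA ▸ trivial : admissibleMorphism ι i) f₂ f₃ hT
  have := mono_ιK hι hT hT'
  have hK : 𝟙 K = 0 := by
    rw [← cancel_mono (ιK f₃ α), zero_comp, Category.id_comp, ← cancel_mono i, zero_comp,
      ιK_mor₁ hT α]
  have : IsIso β := (Triangle.isZero₁_iff_isIso₂ _ hT').1 (by
    change IsZero ((ι.obj K)⟦(1 : ℤ)⟧)
    rw [IsZero.iff_id_eq_zero, ← Functor.map_id, ← ι.map_id, hK, ι.map_zero, Functor.map_zero])
  refine ⟨Q, πQ f₂ β, inv β ≫ f₃, isomorphic_distinguished _ hT _ ?_⟩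
  exact Triangle.isoMk _ _ (Iso.refl (ι.obj X₁)) (Iso.refl (ι.obj X₂)) (asIso β).symm
    (by dsimp only [Triangle.mk]; simp) (by dsimp only [Triangle.mk]; simp)
    (by dsimp only [Triangle.mk]; simp)

variable [HasFiniteProducts A] [ι.Additive]

lemma isNormalMonoCategory : IsNormalMonoCategory A where
  normalMonoOfMono i _ := by
    obtain ⟨X₃, π, δ, hT⟩ := exists_distinguished_triangle_of_mono hι hA i
    exact ⟨⟨X₃, π, _, isLimitKernelForkOfDistTriang hι i π δ hT⟩⟩

lemma isNormalEpiCategory : IsNormalEpiCategory A where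
  normalEpiOfEpi π _ := by
    obtain ⟨X₁, i, δ, hT⟩ := exists_distinguished_triangle_of_epi hι hA π
    exact ⟨⟨X₁, i, _, isColimitCokernelCoforkOfDistTriang hι i π δ hT⟩⟩

lemma nonempty_abelian : Nonempty (Abelian A) :=
  have := isNormalMonoCategory hι hA
  have := isNormalEpiCategory hι hA
  have : HasKernels A := ⟨fun f => hasKernel_of_admissibleMorphism hι f (hA ▸ trivial)⟩
  have : HasCokernels A := ⟨fun f => hasCokernel_of_admissibleMorphism hι f (hA ▸ trivial)⟩
  ⟨{ }⟩

end CategoryTheory.Triangulated.AbelianSubcategory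

lemma Complex.im_exp_mul_ofReal_mul_exp (m ψ φ : ℝ) :
    (Complex.exp (-↑(Real.pi * φ) * Complex.I) *
      ((m : ℂ) * Complex.exp (↑(Real.pi * ψ) * Complex.I))).im =
      m * Real.sin (Real.pi * (ψ - φ)) := by
  rw [mul_left_comm, ← Complex.exp_add, ← add_mul, ← Complex.ofReal_neg, ← Complex.ofReal_add,
    Complex.im_ofReal_mul, Complex.exp_ofReal_mul_I_im]
  ring_nf

namespace StabilityCondition

variable {C} (σ : StabilityCondition C)

lemma Z_eq_zero_of_isZero {E : C} (hE : IsZero E) : σ.Z E = 0 := by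
  have h := σ.Z_additive _ (contractible_distinguished E)
  change σ.Z E = σ.Z E + σ.Z 0 at h
  rw [σ.Z_iso_invariant hE.isoZero, left_eq_add.mp h]

lemma shift_mem {ψ : ℝ} {E : C} (hE : E ∈ σ.P ψ) (n : ℤ) : E⟦n⟧ ∈ σ.P (ψ + n) := by
  induction n using Int.induction_on with
  | zero => simpa using σ.P_isoClosed ψ ((shiftFunctorZero C ℤ).app E).symm hE
  | succ k ih =>
    refine σ.P_isoClosed _ ((shiftFunctorAdd' C (k : ℤ) 1 (k + 1) rfl).app E).symm ?_
    have := (σ.P_shift (ψ + (k : ℤ)) _).2 ⟨_, ih, ⟨Iso.refl _⟩⟩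
    push_cast; rwa [← add_assoc]
  | pred k ih =>
    obtain ⟨F, hF, ⟨e⟩⟩ := (σ.P_shift (ψ + (-k - 1 : ℤ)) (E⟦-(k : ℤ)⟧)).1
      (by push_cast at ih ⊢; ring_nf at ih ⊢; exact ih)
    refine σ.P_isoClosed _ ?_ hF
    exact ((shiftFunctorCompIsoId C (1 : ℤ) (-1) (by norm_num)).app F).symm ≪≫
      (shiftFunctor C (-1 : ℤ)).mapIso e.symm ≪≫
      ((shiftFunctorAdd' C (-(k : ℤ)) (-1) (-(k : ℤ) - 1) (by ring)).app E).symm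

lemma hom_shift_eq_zero {φ : ℝ} {X Y : C} (hX : X ∈ σ.P φ) (hY : Y ∈ σ.P φ) {n : ℤ}
    (hn : n < 0) (f : X ⟶ Y⟦n⟧) : f = 0 :=
  σ.hom_vanishing (by linarith [show (n : ℝ) < 0 by exact_mod_cast hn]) hX (σ.shift_mem hY n) f

lemma exists_im_exp_mul_Z_eq {ψ : ℝ} {A : C} (hA : A ∈ σ.P ψ) (hA0 : ¬ IsZero A) (φ : ℝ) :
    ∃ m : ℝ, 0 < m ∧ (Complex.exp (-↑(Real.pi * φ) * Complex.I) * σ.Z A).im =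
      m * Real.sin (Real.pi * (ψ - φ)) := by
  obtain ⟨m, hm, hZ⟩ := σ.P_phase ψ A hA hA0
  exact ⟨m, hm, by rw [hZ, Complex.im_exp_mul_ofReal_mul_exp]⟩

lemma im_exp_mul_Z_eq_zero {φ : ℝ} {A : C} (hA : A ∈ σ.P φ) :
    (Complex.exp (-↑(Real.pi * φ) * Complex.I) * σ.Z A).im = 0 := by
  by_cases hA0 : IsZero A
  · simp [σ.Z_eq_zero_of_isZero hA0]
  · obtain ⟨m, -, h⟩ := σ.exists_im_exp_mul_Z_eq hA hA0 φ
    rw [h, sub_self, mul_zero, Real.sin_zero, mul_zero]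

end StabilityCondition

namespace HNFiltration

variable {C} {σ : StabilityCondition C} {E : C} (F : HNFiltration C σ.P E)

lemma phase_strictAnti : StrictAnti F.phase := F.phase_anti

lemma phase_le_phase_zero (i : Fin F.n) : F.phase i ≤ F.phase ⟨0, F.npos⟩ :=
  F.phase_strictAnti.antitone (Nat.zero_le _)

lemma shift_obj_hom_eq_zero (n : ℤ) {ψ : ℝ} {B : C} (hB : B ∈ σ.P ψ) (k : Fin (F.n + 1))
    (hk : ∀ i : Fin F.n, i.castSucc < k → ψ < F.phase i + n) (u : (F.obj k)⟦n⟧ ⟶ B) :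
    u = 0 := by
  induction k using Fin.induction with
  | zero => exact ((shiftFunctor C n).map_isZero F.obj_zero).eq_of_src _ _
  | succ j ih =>
    obtain ⟨g, h, hT⟩ := F.distinguished j
    obtain ⟨v, rfl⟩ := Triangle.yoneda_exact₂ _ (Triangle.shift_distinguished _ hT n) u
      (ih (fun i hi => hk i (hi.trans Fin.castSucc_lt_succ)) _)
    obtain rfl : v = 0 :=
      σ.hom_vanishing (hk j Fin.castSucc_lt_succ) (σ.shift_mem (F.A_mem j) n) hB v
    exact comp_zero

lemma obj_succ_zero_mem : F.obj (⟨0, F.npos⟩ : Fin F.n).succ ∈ σ.P (F.phase ⟨0, F.npos⟩) := by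
  obtain ⟨g, h, hT⟩ := F.distinguished ⟨0, F.npos⟩
  have : IsIso g := (Triangle.isZero₁_iff_isIso₂ _ hT).1 F.obj_zero
  exact σ.P_isoClosed _ (asIso g).symm (F.A_mem _)

lemma mem_of_n_eq_one (hn : F.n = 1) : E ∈ σ.P (F.phase ⟨0, F.npos⟩) := by
  have hlast : (⟨0, F.npos⟩ : Fin F.n).succ = Fin.last F.n := Fin.ext (by simp [hn])
  simpa only [hlast, F.obj_last] using F.obj_succ_zero_mem

lemma exists_ne_zero_hom_obj (k : Fin (F.n + 1)) (hk : 0 < k) :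
    ∃ u : F.A ⟨0, F.npos⟩ ⟶ F.obj k, u ≠ 0 := by
  induction k using Fin.induction with
  | zero => exact absurd hk (lt_irrefl _)
  | succ j ih =>
    obtain ⟨g, h, hT⟩ := F.distinguished j
    rcases Nat.eq_zero_or_pos j.val with hj | hj
    · obtain rfl : j = ⟨0, F.npos⟩ := Fin.ext hj
      have : IsIso g := (Triangle.isZero₁_iff_isIso₂ _ hT).1 F.obj_zero
      refine ⟨inv g, fun hg => F.A_nonzero ⟨0, F.npos⟩ ?_⟩
      rw [IsZero.iff_id_eq_zero, ← IsIso.inv_hom_id g, hg, zero_comp]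
    · obtain ⟨u, hu⟩ := ih hj
      refine ⟨u ≫ F.map j, fun hu' => hu ?_⟩
      -- `u` factors through `A_j⟦-1⟧`, which has phase below that of `A_0`
      obtain ⟨v, rfl⟩ := Triangle.coyoneda_exact₂ _ (inv_rot_of_distTriang _ hT) u hu'
      obtain rfl : v = 0 := σ.hom_vanishing
        (by push_cast; linarith [F.phase_le_phase_zero j])
        (F.A_mem _) (σ.shift_mem (F.A_mem j) (-1)) v
      exact zero_comp

lemma phase_le_of_hom_eq_zero {c : ℝ}
    (H : ∀ (ψ : ℝ) (A : C), A ∈ σ.P ψ → c < ψ → ∀ u : A ⟶ E, u = 0) (i : Fin F.n) :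
    F.phase i ≤ c := by
  refine (F.phase_le_phase_zero i).trans (not_lt.1 fun hc => ?_)
  obtain ⟨u, hu⟩ := F.exists_ne_zero_hom_obj (Fin.last F.n) (by simp [Fin.lt_def, F.npos])
  apply hu
  rw [← cancel_mono (eqToHom F.obj_last), zero_comp]
  exact H _ _ (F.A_mem _) hc _

lemma mor₂_ne_zero (j : Fin F.n) {g : F.obj j.succ ⟶ F.A j}
    {h : F.A j ⟶ (F.obj j.castSucc)⟦(1 : ℤ)⟧} (hT : Triangle.mk (F.map j) g h ∈ distTriang C) :
    g ≠ 0 := by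
  intro hg
  -- if `g = 0`, then `A_j` is a retract of `(F.obj j)⟦1⟧`, whose HN phases are all larger
  obtain ⟨r, hr⟩ := Triangle.yoneda_exact₃ _ hT (𝟙 _) (by subst hg; exact zero_comp)
  obtain rfl : r = 0 := F.shift_obj_hom_eq_zero 1 (F.A_mem j) j.castSucc
    (fun i hi => by push_cast; linarith [F.phase_anti (Fin.castSucc_lt_castSucc_iff.1 hi)]) r
  exact F.A_nonzero j ((IsZero.iff_id_eq_zero _).2 (hr.trans comp_zero))

lemma le_phase_of_hom_eq_zero {c : ℝ}
    (H : ∀ (ψ : ℝ) (B : C), B ∈ σ.P ψ → ψ < c → ∀ u : E ⟶ B, u = 0) (i : Fin F.n) :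
    c ≤ F.phase i := by
  have hn := F.npos
  let j : Fin F.n := ⟨F.n - 1, by omega⟩
  have hj : j.succ = Fin.last F.n := Fin.ext (by simp [j]; omega)
  refine (not_lt.1 fun hc => ?_).trans
    (F.phase_strictAnti.antitone (show i ≤ j by simp [j, Fin.le_def]; omega))
  obtain ⟨g, h, hT⟩ := F.distinguished j
  apply F.mor₂_ne_zero j hT
  have hE : E = F.obj j.succ := by rw [hj, F.obj_last]
  rw [← cancel_epi (eqToHom hE), comp_zero]
  exact H _ _ (F.A_mem j) hc _

lemma Z_obj_eq_sum (k : Fin (F.n + 1)) :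
    σ.Z (F.obj k) = ∑ j with j.castSucc < k, σ.Z (F.A j) := by
  induction k using Fin.induction with
  | zero => simpa using σ.Z_eq_zero_of_isZero F.obj_zero
  | succ i ih =>
    obtain ⟨g, h, hT⟩ := F.distinguished i
    have hfilter : Finset.univ.filter (fun j : Fin F.n => j.castSucc < i.succ) =
        insert i (Finset.univ.filter fun j => j.castSucc < i.castSucc) := by
      ext j
      simp [le_iff_lt_or_eq, or_comm]
    have hZ : σ.Z (F.obj i.succ) = σ.Z (F.obj i.castSucc) + σ.Z (F.A i) := σ.Z_additive _ hT
    rw [hZ, hfilter, Finset.sum_insert (by simp), ih, add_comm]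

lemma Z_eq_sum : σ.Z E = ∑ j, σ.Z (F.A j) := by
  simpa [F.obj_last, Fin.castSucc_lt_last] using F.Z_obj_eq_sum (Fin.last F.n)

lemma phase_mem_Icc_of_distTriang {φ : ℝ} {T : Triangle C} (hT : T ∈ distTriang C)
    (h₁ : T.obj₁ ∈ σ.P φ) (h₂ : T.obj₂ ∈ σ.P φ) (F : HNFiltration C σ.P T.obj₃) (i : Fin F.n) :
    F.phase i ∈ Set.Icc φ (φ + 1) := by
  have hT' := rot_of_distTriang _ hT
  have h₁' : T.obj₁⟦(1 : ℤ)⟧ ∈ σ.P (φ + 1) := by simpa using σ.shift_mem h₁ 1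
  exact ⟨F.le_phase_of_hom_eq_zero (fun _ _ hB hψ => Triangle.obj₂_hom_eq_zero hT'
      (σ.hom_vanishing hψ h₂ hB) (σ.hom_vanishing (by linarith) h₁' hB)) i,
    F.phase_le_of_hom_eq_zero (fun _ _ hA hψ => Triangle.hom_obj₂_eq_zero hT'
      (σ.hom_vanishing (by linarith) hA h₂) (σ.hom_vanishing hψ hA h₁')) i⟩

lemma phase_eq_or_eq_of_distTriang {φ : ℝ} {T : Triangle C} (hT : T ∈ distTriang C)
    (h₁ : T.obj₁ ∈ σ.P φ) (h₂ : T.obj₂ ∈ σ.P φ) (F : HNFiltration C σ.P T.obj₃) (i : Fin F.n) :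
    F.phase i = φ + 1 ∨ F.phase i = φ := by
  have hbounds := F.phase_mem_Icc_of_distTriang hT h₁ h₂
  -- the central charges of the HN factors lie in the closed upper half plane relative to
  -- the ray of phase `φ`, and add up to `Z(T.obj₂) - Z(T.obj₁)`, which lies on that ray
  set u := Complex.exp (-↑(Real.pi * φ) * Complex.I)
  have him (j : Fin F.n) : ∃ m : ℝ, 0 < m ∧
      (u * σ.Z (F.A j)).im = m * Real.sin (Real.pi * (F.phase j - φ)) :=
    σ.exists_im_exp_mul_Z_eq (F.A_mem j) (F.A_nonzero j) φ
  have hnonneg (j : Fin F.n) : 0 ≤ (u * σ.Z (F.A j)).im := by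
    obtain ⟨m, hm, hj⟩ := him j
    rw [hj]
    exact mul_nonneg hm.le (Real.sin_nonneg_of_nonneg_of_le_pi
      (by nlinarith [(hbounds j).1, Real.pi_pos]) (by nlinarith [(hbounds j).2, Real.pi_pos]))
  have hsum : ∑ j, (u * σ.Z (F.A j)).im = 0 := by
    have hZ : σ.Z T.obj₂ = σ.Z T.obj₁ + σ.Z T.obj₃ := σ.Z_additive _ hT
    rw [← Complex.im_sum, ← Finset.mul_sum, ← F.Z_eq_sum, eq_sub_of_add_eq' hZ.symm, mul_sub,
      Complex.sub_im, σ.im_exp_mul_Z_eq_zero h₂, σ.im_exp_mul_Z_eq_zero h₁, sub_zero]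
  have hi := (Finset.sum_eq_zero_iff_of_nonneg (fun j _ => hnonneg j)).1 hsum i
    (Finset.mem_univ _)
  obtain ⟨m, hm, him⟩ := him i
  obtain ⟨hge, hle⟩ := hbounds i
  by_contra! hne
  have hsin : 0 < Real.sin (Real.pi * (F.phase i - φ)) := Real.sin_pos_of_pos_of_lt_pi
    (mul_pos Real.pi_pos (sub_pos.2 (hge.lt_of_ne' hne.2)))
    (by nlinarith [hle.lt_of_ne hne.1, Real.pi_pos])
  nlinarith

lemma exists_distTriang_of_phase_eq_or_eq {ψ₁ ψ₂ : ℝ} (hψ : ψ₂ < ψ₁)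
    (hF : ∀ i, F.phase i = ψ₁ ∨ F.phase i = ψ₂) :
    ∃ (A B : C) (a : A ⟶ E) (b : E ⟶ B) (c : B ⟶ A⟦(1 : ℤ)⟧),
      A ∈ σ.P ψ₁ ∧ B ∈ σ.P ψ₂ ∧ Triangle.mk a b c ∈ distTriang C := by
  have hn : F.n = 1 ∨ F.n = 2 := by
    by_contra! hn
    have : 3 ≤ F.n := by have := F.npos; omega
    have h01 := F.phase_anti (show (⟨0, by omega⟩ : Fin F.n) < ⟨1, by omega⟩ from Nat.zero_lt_one)
    have h12 := F.phase_anti (show (⟨1, by omega⟩ : Fin F.n) < ⟨2, by omega⟩ from Nat.one_lt_two)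
    rcases hF ⟨0, by omega⟩ with h0 | h0 <;> rcases hF ⟨1, by omega⟩ with h1 | h1 <;>
      rcases hF ⟨2, by omega⟩ with h2 | h2 <;> linarith
  rcases hn with hn | hn
  · have hE := F.mem_of_n_eq_one hn
    rcases hF ⟨0, F.npos⟩ with h | h <;> rw [h] at hE
    · exact ⟨E, 0, 𝟙 E, 0, 0, hE, σ.P_zero_mem _ _ (isZero_zero C), contractible_distinguished E⟩
    · exact ⟨0, E, 0, 𝟙 E, 0, σ.P_zero_mem _ _ (isZero_zero C), hE, contractible_distinguished₁ E⟩
  · have h01 := F.phase_anti (show (⟨0, F.npos⟩ : Fin F.n) < ⟨1, by omega⟩ from Nat.zero_lt_one)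
    have h0 : F.phase ⟨0, F.npos⟩ = ψ₁ := by
      rcases hF ⟨0, F.npos⟩ with h0 | h0 <;> rcases hF ⟨1, by omega⟩ with h1 | h1 <;> linarith
    have h1 : F.phase ⟨1, by omega⟩ = ψ₂ := by
      rcases hF ⟨0, F.npos⟩ with h0 | h0 <;> rcases hF ⟨1, by omega⟩ with h1 | h1 <;> linarith
    obtain ⟨g, h, hT⟩ := F.distinguished ⟨1, by omega⟩
    have hlast : (⟨1, by omega⟩ : Fin F.n).succ = Fin.last F.n := Fin.ext (by simp [hn])
    rw [← F.obj_last, ← hlast]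
    refine ⟨_, _, F.map _, g, h, ?_, h1 ▸ F.A_mem _, hT⟩
    rw [← h0]
    exact F.obj_succ_zero_mem

end HNFiltration

namespace StabilityCondition

variable {C} (σ : StabilityCondition C)

lemma mem_of_distTriang {φ : ℝ} {T : Triangle C} (hT : T ∈ distTriang C)
    (h₁ : T.obj₁ ∈ σ.P φ) (h₃ : T.obj₃ ∈ σ.P φ) : T.obj₂ ∈ σ.P φ := by
  by_cases hE : IsZero T.obj₂
  · exact σ.P_zero_mem φ _ hE
  obtain ⟨F⟩ := σ.HN _ hE
  have hphase (i : Fin F.n) : F.phase i = φ :=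
    le_antisymm
      (F.phase_le_of_hom_eq_zero (fun _ _ hA hψ => Triangle.hom_obj₂_eq_zero hT
        (σ.hom_vanishing hψ hA h₁) (σ.hom_vanishing hψ hA h₃)) i)
      (F.le_phase_of_hom_eq_zero (fun _ _ hB hψ => Triangle.obj₂_hom_eq_zero hT
        (σ.hom_vanishing hψ h₁ hB) (σ.hom_vanishing hψ h₃ hB)) i)
  have hn : F.n = 1 := by
    by_contra hn
    have := F.phase_anti
      (show (⟨0, F.npos⟩ : Fin F.n) < ⟨1, by have := F.npos; omega⟩ from Nat.zero_lt_one)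
    rw [hphase, hphase] at this
    exact lt_irrefl _ this
  simpa only [hphase] using F.mem_of_n_eq_one hn

lemma exists_distTriang_shift_obj₃ {φ : ℝ} {T : Triangle C} (hT : T ∈ distTriang C)
    (h₁ : T.obj₁ ∈ σ.P φ) (h₂ : T.obj₂ ∈ σ.P φ) :
    ∃ (K Q : C), K ∈ σ.P φ ∧ Q ∈ σ.P φ ∧ ∃ (α : K⟦(1 : ℤ)⟧ ⟶ T.obj₃) (β : T.obj₃ ⟶ Q)
      (γ : Q ⟶ K⟦(1 : ℤ)⟧⟦(1 : ℤ)⟧), Triangle.mk α β γ ∈ distTriang C := by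
  obtain ⟨A, Q, a, b, c, hA, hQ, hT'⟩ : ∃ (A Q : C) (a : A ⟶ T.obj₃) (b : T.obj₃ ⟶ Q)
      (c : Q ⟶ A⟦(1 : ℤ)⟧), A ∈ σ.P (φ + 1) ∧ Q ∈ σ.P φ ∧ Triangle.mk a b c ∈ distTriang C := by
    by_cases hZ : IsZero T.obj₃
    · exact ⟨0, _, 0, 𝟙 _, 0, σ.P_zero_mem _ _ (isZero_zero C), σ.P_zero_mem _ _ hZ,
        contractible_distinguished₁ _⟩
    · obtain ⟨F⟩ := σ.HN _ hZ
      exact F.exists_distTriang_of_phase_eq_or_eq (by linarith)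
        (F.phase_eq_or_eq_of_distTriang hT h₁ h₂)
  obtain ⟨K, hK, ⟨e⟩⟩ := (σ.P_shift φ A).1 hA
  refine ⟨K, Q, hK, hQ, e.inv ≫ a, b, c ≫ e.hom⟦(1 : ℤ)⟧', isomorphic_distinguished _ hT' _ ?_⟩
  exact Triangle.isoMk _ _ e.symm (Iso.refl T.obj₃) (Iso.refl Q)
    (by dsimp only [Triangle.mk]; simp) (by dsimp only [Triangle.mk]; simp)
    (by dsimp only [Triangle.mk]; simp [← Functor.map_comp])

lemma admissibleMorphism_eq_top (φ : ℝ) :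
    Triangulated.AbelianSubcategory.admissibleMorphism
      (ObjectProperty.ι fun X : C => X ∈ σ.P φ) = ⊤ := by
  ext X₁ X₂ f₁
  simp only [MorphismProperty.top_apply, iff_true]
  intro X₃ f₂ f₃ hT
  obtain ⟨K, Q, hK, hQ, α, β, γ, hT'⟩ :=
    σ.exists_distTriang_shift_obj₃ hT X₁.property X₂.property
  exact ⟨⟨K, hK⟩, ⟨Q, hQ⟩, α, β, γ, hT'⟩

lemma hasFiniteProducts_fullSubcategory (φ : ℝ) :
    HasFiniteProducts (ObjectProperty.FullSubcategory fun X : C => X ∈ σ.P φ) := by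
  let P : ObjectProperty C := fun X => X ∈ σ.P φ
  have : P.IsClosedUnderIsomorphisms := ⟨fun e h => σ.P_isoClosed φ e h⟩
  have : P.ContainsZero := ⟨⟨0, isZero_zero C, σ.P_zero_mem φ _ (isZero_zero C)⟩⟩
  have : P.IsClosedUnderBinaryProducts := ⟨by
    rintro X ⟨p⟩
    refine P.prop_of_iso ?_ (σ.mem_of_distTriang (binaryProductTriangle_distinguished _ _)
      (p.prop_diag_obj (.mk .left)) (p.prop_diag_obj (.mk .right)))
    exact IsLimit.conePointUniqueUpToIso (prodIsProd _ _)
      ((IsLimit.postcomposeHomEquiv (diagramIsoPair p.diag) _).2 p.isLimit)⟩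
  have : P.IsClosedUnderFiniteProducts := .mk'
  infer_instance

end StabilityCondition

/-- for a stability condition `σ = (Z, P)` and every `φ ∈ ℝ`, the full
additive subcategory `P(φ) ⊆ D` is an abelian category. -/
theorem statement0 (σ : StabilityCondition C) (φ : ℝ) :
    Nonempty (Abelian (ObjectProperty.FullSubcategory (fun X : C => X ∈ σ.P φ))) := by
  have := σ.hasFiniteProducts_fullSubcategory φ
  exact Triangulated.AbelianSubcategory.nonempty_abelian
    (fun X Y _ f hn => σ.hom_shift_eq_zero X.property Y.property hn f)
    (σ.admissibleMorphism_eq_top φ)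
end

section
/- Let D be a triangulated category and give the set Stab(D) of locally finite stability conditions the topology induced by the generalized metric d. For every nonzero object E ∈ D, the subset { σ ∈ Stab(D) : E is semistable in σ } is closed in Stab(D). Equivalently, a nonzero object E is semistable in σ precisely when φ⁺_σ(E) = φ⁻_σ(E), and the set where this equality holds is closed. -/
/-!
Basic definitions: Bridgeland stability conditions on a triangulated category.

The Grothendieck group `K(D)` is encoded implicitly: a group homomorphism `K(D) → ℂ`
is the same thing as a function on objects which is invariant under isomorphism and
additive on distinguished triangles.
-/

open CategoryTheory CategoryTheory.Limits CategoryTheory.Pretriangulated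
open scoped ENNReal Classical

universe v u

variable (C : Type u) [Category.{v} C] [HasZeroObject C] [HasShift C ℤ]
  [Preadditive C] [∀ n : ℤ, (CategoryTheory.shiftFunctor C n).Additive] [Pretriangulated C]

/-!
If `E ∈ P(ψ)` has HN factors `A₁, …, Aₙ` of phases `φ₁ > ⋯ > φₙ`, hom-vanishing applied to
two nonzero maps forces `φ₁ ≤ ψ ≤ φₙ`, hence `n = 1`. The composite `A₁ ≅ E₁ → E` is nonzero
because each step `Eᵢ → Eᵢ₊₁` has fibre `Aᵢ⟦-1⟧`, of phase `< φ₁`; the projection `E → Aₙ`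
is nonzero since otherwise `Aₙ` would be a retract of `Eₙ₋₁⟦1⟧`, all of whose HN phases
exceed `φₙ`. Conversely a one-step filtration gives `E ≅ A₁`. Finally `φ⁺` and `φ⁻` are
`1`-Lipschitz for `d`, hence continuous on `Stab(D)`, so the semistable locus `{φ⁺ = φ⁻}`
is closed.
-/

namespace StabilityCondition

variable {C}

lemma shift_mem_P (σ : StabilityCondition C) {φ : ℝ} {X : C} (hX : X ∈ σ.P φ) :
    X⟦(1 : ℤ)⟧ ∈ σ.P (φ + 1) :=
  (σ.P_shift φ _).mpr ⟨X, hX, ⟨Iso.refl _⟩⟩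

end StabilityCondition

namespace HNFiltration

variable {C} {X : C}

section

variable {P : ℝ → Set C} (F : HNFiltration C P X)

def first : Fin F.n := ⟨0, F.npos⟩

def last : Fin F.n := ⟨F.n - 1, Nat.sub_lt F.npos one_pos⟩

lemma le_phase_first (i : Fin F.n) : F.phase i ≤ F.phase F.first := by
  rcases Nat.eq_zero_or_pos i.1 with h | h
  · exact le_of_eq (congrArg F.phase (Fin.ext h))
  · exact (F.phase_anti (show F.first < i from h)).le

lemma phase_last_le (i : Fin F.n) : F.phase F.last ≤ F.phase i := by
  rcases (show i.1 ≤ F.n - 1 by omega).lt_or_eq with h | h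
  · exact (F.phase_anti (show i < F.last from h)).le
  · exact le_of_eq (congrArg F.phase (Fin.ext h.symm))

lemma last_succ : F.last.succ = Fin.last F.n :=
  Fin.ext (Nat.sub_add_cancel F.npos)

lemma first_eq_last_of_phase_eq (h : F.phase F.first = F.phase F.last) : F.first = F.last := by
  by_contra hne
  have hlt : F.first < F.last := lt_of_le_of_ne (Nat.zero_le _) hne
  exact (F.phase_anti hlt).ne' h

lemma nonempty_iso_obj_first_succ : Nonempty (F.obj F.first.succ ≅ F.A F.first) := by
  obtain ⟨g, h, hT⟩ := F.distinguished F.first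
  have : IsIso g := (Triangle.isZero₁_iff_isIso₂ _ hT).mp F.obj_zero
  exact ⟨asIso g⟩

end

section

variable {σ : StabilityCondition C} (F : HNFiltration C σ.P X)

lemma obj_first_succ_mem_P : F.obj F.first.succ ∈ σ.P (F.phase F.first) :=
  σ.P_isoClosed _ F.nonempty_iso_obj_first_succ.some.symm (F.A_mem _)

lemma not_isZero_obj_first_succ : ¬ IsZero (F.obj F.first.succ) :=
  fun h => F.A_nonzero _ (h.of_iso F.nonempty_iso_obj_first_succ.some.symm)

lemma hom_shift_obj_eq_zero {B : C} {φ : ℝ} (hB : B ∈ σ.P φ)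
    (hφ : ∀ i : Fin F.n, φ < F.phase i + 1) :
    ∀ (j : Fin (F.n + 1)) (f : (F.obj j)⟦(1 : ℤ)⟧ ⟶ B), f = 0 := by
  intro j
  induction j using Fin.induction with
  | zero => exact ((shiftFunctor C (1 : ℤ)).map_isZero F.obj_zero).eq_zero_of_src
  | succ i ih =>
    intro f
    obtain ⟨g, h, hT⟩ := F.distinguished i
    obtain ⟨k, rfl⟩ := Triangle.yoneda_exact₂ _
      (rot_of_distTriang _ (rot_of_distTriang _ (rot_of_distTriang _ hT))) f (ih _)
    rw [σ.hom_vanishing (hφ i) (σ.shift_mem_P (F.A_mem i)) hB k]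
    exact comp_zero

lemma comp_map_ne_zero {A : C} {φ : ℝ} (hA : A ∈ σ.P φ) (i : Fin F.n)
    (hφ : F.phase i < φ + 1) {u : A ⟶ F.obj i.castSucc} (hu : u ≠ 0) : u ≫ F.map i ≠ 0 := by
  intro hzero
  obtain ⟨g, h, hT⟩ := F.distinguished i
  obtain ⟨k, hk⟩ := Triangle.coyoneda_exact₁ _ hT (u⟦(1 : ℤ)⟧')
    (show u⟦(1 : ℤ)⟧' ≫ (F.map i)⟦(1 : ℤ)⟧' = 0 by
      rw [← Functor.map_comp, hzero, Functor.map_zero])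
  rw [σ.hom_vanishing hφ (σ.shift_mem_P hA) (F.A_mem i) k] at hk
  exact hu ((shiftFunctor C (1 : ℤ)).map_eq_zero_iff.mp (hk.trans zero_comp))

lemma exists_hom_obj_first_succ_ne_zero :
    ∀ j : Fin (F.n + 1), 0 < j → ∃ u : F.obj F.first.succ ⟶ F.obj j, u ≠ 0 := by
  intro j
  induction j using Fin.induction with
  | zero => exact fun h => absurd h (lt_irrefl _)
  | succ i ih =>
    intro _
    rcases Nat.eq_zero_or_pos i.1 with hi | hi
    · obtain rfl : i = F.first := Fin.ext hi
      exact ⟨𝟙 _, fun h => F.not_isZero_obj_first_succ ((IsZero.iff_id_eq_zero _).mpr h)⟩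
    · obtain ⟨u, hu⟩ := ih hi
      refine ⟨u ≫ F.map i, F.comp_map_ne_zero F.obj_first_succ_mem_P i ?_ hu⟩
      linarith [F.le_phase_first i]

lemma exists_hom_obj_last_succ_ne_zero : ∃ g : F.obj F.last.succ ⟶ F.A F.last, g ≠ 0 := by
  obtain ⟨g, h, hT⟩ := F.distinguished F.last
  refine ⟨g, fun hg => F.A_nonzero F.last ((IsZero.iff_id_eq_zero _).mpr ?_)⟩
  obtain ⟨k, hk⟩ := Triangle.yoneda_exact₃ _ hT (𝟙 (F.A F.last))
    (show g ≫ 𝟙 _ = 0 by rw [hg, zero_comp])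
  rw [F.hom_shift_obj_eq_zero (F.A_mem F.last)
    (fun i => (F.phase_last_le i).trans_lt (lt_add_one _)) F.last.castSucc k] at hk
  exact hk.trans comp_zero

lemma mem_P_of_phase_first_eq_last (h : F.phase F.first = F.phase F.last) :
    X ∈ σ.P (F.phase F.first) := by
  have hlast : F.obj F.first.succ = X := by
    rw [F.first_eq_last_of_phase_eq h, F.last_succ, F.obj_last]
  exact σ.P_isoClosed _ (eqToIso hlast) F.obj_first_succ_mem_P

end

end HNFiltration

namespace StabilityCondition

variable {C}

section

variable (σ : StabilityCondition C) {X : C}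

lemma phase_first_le_of_mem_P {ψ : ℝ} (hX : X ∈ σ.P ψ) (F : HNFiltration C σ.P X) :
    F.phase F.first ≤ ψ := by
  by_contra! h
  obtain ⟨u, hu⟩ := F.exists_hom_obj_first_succ_ne_zero (Fin.last F.n) F.npos
  have hX' : F.obj (Fin.last F.n) ∈ σ.P ψ := by rw [F.obj_last]; exact hX
  exact hu (σ.hom_vanishing h F.obj_first_succ_mem_P hX' u)

lemma le_phase_last_of_mem_P {ψ : ℝ} (hX : X ∈ σ.P ψ) (F : HNFiltration C σ.P X) :
    ψ ≤ F.phase F.last := by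
  by_contra! h
  obtain ⟨g, hg⟩ := F.exists_hom_obj_last_succ_ne_zero
  have hX' : F.obj F.last.succ ∈ σ.P ψ := by rw [F.last_succ, F.obj_last]; exact hX
  exact hg (σ.hom_vanishing h hX' (F.A_mem _) g)

lemma exists_mem_P_iff_phiPlus_eq_phiMinus (hX : ¬ IsZero X) :
    (∃ φ, X ∈ σ.P φ) ↔ σ.phiPlus X = σ.phiMinus X := by
  set F := (σ.HN X hX).some
  rw [phiPlus, phiMinus, dif_pos hX, dif_pos hX]
  constructor
  · rintro ⟨ψ, hψ⟩
    exact le_antisymm ((σ.phase_first_le_of_mem_P hψ F).trans (σ.le_phase_last_of_mem_P hψ F))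
      (F.phase_last_le _)
  · exact fun h => ⟨_, F.mem_P_of_phase_first_eq_last h⟩

end

lemma stabDist_self (σ : StabilityCondition C) : stabDist σ σ = 0 := by
  refine le_antisymm (iSup_le fun X => ?_) zero_le
  rcases eq_or_ne (σ.mass X.1) 0 with h | h <;> simp [h]

section

variable (σ τ : StabilityCondition C) (X : C)

lemma ofReal_abs_phiMinus_sub_le_stabDist :
    ENNReal.ofReal |τ.phiMinus X - σ.phiMinus X| ≤ stabDist σ τ := by
  by_cases hX : IsZero X
  · simp [phiMinus, hX]
  · exact (ENNReal.ofReal_le_ofReal (le_max_left _ _)).trans (le_iSup_of_le ⟨X, hX⟩ le_rfl)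

lemma ofReal_abs_phiPlus_sub_le_stabDist :
    ENNReal.ofReal |τ.phiPlus X - σ.phiPlus X| ≤ stabDist σ τ := by
  by_cases hX : IsZero X
  · simp [phiPlus, hX]
  · exact (ENNReal.ofReal_le_ofReal ((le_max_left _ _).trans (le_max_right _ _))).trans
      (le_iSup_of_le ⟨X, hX⟩ le_rfl)

end

end StabilityCondition

open scoped Topology

namespace Stab

variable {C}

lemma isOpen_setOf_stabDist_lt (σ : Stab C) {ε : ℝ≥0∞} (hε : 0 < ε) :
    IsOpen {τ : Stab C | StabilityCondition.stabDist σ.1 τ.1 < ε} :=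
  TopologicalSpace.isOpen_generateFrom_of_mem ⟨σ, ε, hε, rfl⟩

lemma setOf_stabDist_lt_mem_nhds (σ : Stab C) {ε : ℝ≥0∞} (hε : 0 < ε) :
    {τ : Stab C | StabilityCondition.stabDist σ.1 τ.1 < ε} ∈ 𝓝 σ := by
  refine (isOpen_setOf_stabDist_lt σ hε).mem_nhds ?_
  show StabilityCondition.stabDist σ.1 σ.1 < ε
  rw [StabilityCondition.stabDist_self]
  exact hε

lemma continuous_of_ofReal_abs_sub_le_stabDist (f : Stab C → ℝ)
    (hf : ∀ σ τ, ENNReal.ofReal |f τ - f σ| ≤ StabilityCondition.stabDist σ.1 τ.1) :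
    Continuous f :=
  continuous_iff_continuousAt.2 fun σ => Metric.tendsto_nhds.2 fun _ hε =>
    Filter.mem_of_superset (setOf_stabDist_lt_mem_nhds σ (ENNReal.ofReal_pos.2 hε))
      fun τ hτ => (ENNReal.ofReal_lt_ofReal_iff hε).1 ((hf σ τ).trans_lt hτ)

lemma continuous_phiMinus (E : C) : Continuous fun σ : Stab C => σ.1.phiMinus E :=
  continuous_of_ofReal_abs_sub_le_stabDist _ fun σ τ =>
    σ.1.ofReal_abs_phiMinus_sub_le_stabDist τ.1 E

lemma continuous_phiPlus (E : C) : Continuous fun σ : Stab C => σ.1.phiPlus E :=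
  continuous_of_ofReal_abs_sub_le_stabDist _ fun σ τ =>
    σ.1.ofReal_abs_phiPlus_sub_le_stabDist τ.1 E

end Stab

/-- for every nonzero object `E`, the set of locally finite stability
conditions in which `E` is semistable is closed in `Stab(D)`; equivalently `E` is
semistable in `σ` precisely when `φ⁺_σ(E) = φ⁻_σ(E)`, and the set where this equality
holds is closed. -/
theorem statement3 (E : C) (hE : ¬ IsZero E) :
    (∀ σ : Stab C, (∃ φ : ℝ, E ∈ σ.1.P φ) ↔
      StabilityCondition.phiPlus σ.1 E = StabilityCondition.phiMinus σ.1 E) ∧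
    IsClosed {σ : Stab C | ∃ φ : ℝ, E ∈ σ.1.P φ} := by
  have semistable_iff (σ : Stab C) := σ.1.exists_mem_P_iff_phiPlus_eq_phiMinus hE
  refine ⟨semistable_iff, ?_⟩
  simp_rw [semistable_iff]
  exact isClosed_eq (Stab.continuous_phiPlus E) (Stab.continuous_phiMinus E)
end

section
/- Let D be a triangulated category and let G̃ be the group of pairs (T, f) where f : ℝ → ℝ is an increasing map with f(φ+1) = f(φ)+1 and T : ℝ² → ℝ² is an orientation-preserving linear isomorphism, such that the induced maps on S¹ = ℝ/2ℤ = (ℝ²∖{0})/ℝ_{>0} agree (this group is the universal covering group of GL⁺(2, ℝ)). Then: (1) the assignment sending a locally finite stability condition σ = (Z, P) and a pair (T, f) ∈ G̃ to σ′ = (T⁻¹ ∘ Z, P′) with P′(φ) = P(f(φ)) (viewing Z as valued in ℝ² ≅ ℂ) is a well-defined right action of G̃ on Stab(D); (2) the assignment sending an exact autoequivalence Φ of D and σ = (Z, P) to Φ(σ) = (Z ∘ φ⁻¹, P′) with P′(t) = Φ(P(t)), where φ is the automorphism of K(D) induced by Φ, is a well-defined left action of the group Aut(D) of exact autoequivalences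 on Stab(D); and (3) these two actions commute. -/
/-!
Basic definitions: Bridgeland stability conditions on a triangulated category.

The Grothendieck group `K(D)` is encoded implicitly: a group homomorphism `K(D) → ℂ`
is the same thing as a function on objects which is invariant under isomorphism and
additive on distinguished triangles.
-/

open CategoryTheory CategoryTheory.Limits CategoryTheory.Pretriangulated
open scoped ENNReal Classical

universe v u

variable (C : Type u) [Category.{v} C] [HasZeroObject C] [HasShift C ℤ]
  [Preadditive C] [∀ n : ℤ, (CategoryTheory.shiftFunctor C n).Additive] [Pretriangulated C]

/-- A pair `(T, f)` in the universal cover of `GL⁺(2, ℝ)`: `f` is an increasing map with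
`f(φ+1) = f(φ)+1`, `T` is an orientation-preserving linear automorphism of `ℝ²`, and the
induced maps on `S¹ = (ℝ²∖{0})/ℝ_{>0} = ℝ/2ℤ` agree. -/
def GAdmissible (T : (ℝ × ℝ) ≃ₗ[ℝ] ℝ × ℝ) (f : ℝ → ℝ) : Prop :=
  Monotone f ∧ (∀ φ : ℝ, f (φ + 1) = f φ + 1) ∧
  0 < LinearMap.det (T : (ℝ × ℝ) →ₗ[ℝ] ℝ × ℝ) ∧
  ∀ φ : ℝ, ∃ r : ℝ, 0 < r ∧
    T (Real.cos (Real.pi * φ), Real.sin (Real.pi * φ)) =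
      r • (Real.cos (Real.pi * f φ), Real.sin (Real.pi * f φ))

/-- `σ' = σ · (T, f)`: the right action of the universal cover of `GL⁺(2,ℝ)`,
`Z' = T⁻¹ ∘ Z` (viewing `Z` as valued in `ℝ² ≅ ℂ`) and `P'(φ) = P(f(φ))`. -/
def IsGAct (σ : StabilityCondition C) (T : (ℝ × ℝ) ≃ₗ[ℝ] ℝ × ℝ) (f : ℝ → ℝ)
    (σ' : StabilityCondition C) : Prop :=
  (∀ E : C, σ'.Z E = Complex.equivRealProdLm.symm (T.symm (Complex.equivRealProdLm (σ.Z E)))) ∧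
  ∀ φ : ℝ, σ'.P φ = σ.P (f φ)

/-- `σ' = Φ(σ)`: the left action of an autoequivalence `Φ`, with `Z' = Z ∘ φ⁻¹` for the
induced automorphism `φ` of `K(D)` and `P'(t) = Φ(P(t))` (as strictly full
subcategories, `E ∈ P'(t) ↔ Φ⁻¹(E) ∈ P(t)`). -/
def IsAutAct (σ : StabilityCondition C) (Φ : C ≌ C) (σ' : StabilityCondition C) : Prop :=
  (∀ E : C, σ'.Z E = σ.Z (Φ.inverse.obj E)) ∧
  ∀ (φ : ℝ) (E : C), E ∈ σ'.P φ ↔ Φ.inverse.obj E ∈ σ.P φ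

/-!
Because `T` and `f` agree on the circle, `T⁻¹ Z(E)` lies on the ray of phase `φ` whenever
`E ∈ P(f φ)`. Since `f` commutes with integer translations and `T` induces a bijection of the
circle, `f` is an increasing bijection of `ℝ`, so it preserves Hom-vanishing and HN filtrations,
and it is uniformly continuous, so thin phase intervals go to thin phase intervals and local
finiteness survives. An exact autoequivalence transports all the data, distinguished triangles
included. The action laws and the commutation are then identities between the defining formulas.
-/

noncomputable def phaseVec (φ : ℝ) : ℝ × ℝ := (Real.cos (Real.pi * φ), Real.sin (Real.pi * φ))

lemma phaseVec_ne_zero (φ : ℝ) : phaseVec φ ≠ 0 := fun h => by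
  have := Real.cos_sq_add_sin_sq (Real.pi * φ)
  simp_all [phaseVec]

lemma equivRealProdLm_ofReal_mul_exp (m φ : ℝ) :
    Complex.equivRealProdLm ((m : ℂ) * Complex.exp ((Real.pi * φ : ℝ) * Complex.I)) =
      m • phaseVec φ := by
  ext <;> simp only [Complex.equivRealProdLm_apply, Complex.mul_re, Complex.mul_im,
    Complex.ofReal_re, Complex.ofReal_im, Complex.exp_ofReal_mul_I_re,
    Complex.exp_ofReal_mul_I_im] <;> simp [phaseVec]

lemma exists_int_of_smul_phaseVec_eq {r s a b : ℝ} (hr : 0 < r) (hs : 0 < s)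
    (h : r • phaseVec a = s • phaseVec b) : ∃ k : ℤ, a = b + 2 * k := by
  have hz : (r : ℂ) * Complex.exp ((Real.pi * a : ℝ) * Complex.I) =
      (s : ℂ) * Complex.exp ((Real.pi * b : ℝ) * Complex.I) := by
    apply Complex.equivRealProdLm.injective
    rw [equivRealProdLm_ofReal_mul_exp, equivRealProdLm_ofReal_mul_exp, h]
  have hrs : r = s := by
    have := congrArg norm hz
    rwa [norm_mul, norm_mul, Complex.norm_exp_ofReal_mul_I, Complex.norm_exp_ofReal_mul_I,
      Complex.norm_of_nonneg hr.le, Complex.norm_of_nonneg hs.le, mul_one, mul_one] at this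
  subst hrs
  obtain ⟨k, hk⟩ := Complex.exp_eq_exp_iff_exists_int.1
    (mul_left_cancel₀ (by exact_mod_cast hr.ne') hz)
  have him : Real.pi * a = Real.pi * b + k * (2 * Real.pi) := by
    simpa using congrArg Complex.im hk
  exact ⟨k, mul_left_cancel₀ Real.pi_ne_zero (by rw [him]; ring)⟩

lemma exists_eq_smul_phaseVec {v : ℝ × ℝ} (hv : v ≠ 0) :
    ∃ s : ℝ, 0 < s ∧ ∃ φ, v = s • phaseVec φ := by
  set z := Complex.equivRealProdLm.symm v
  have hz : z ≠ 0 := by simpa [z] using hv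
  refine ⟨‖z‖, norm_pos_iff.2 hz, z.arg / Real.pi, ?_⟩
  rw [← equivRealProdLm_ofReal_mul_exp, mul_div_cancel₀ _ Real.pi_ne_zero,
    Complex.norm_mul_exp_arg_mul_I, LinearEquiv.apply_symm_apply]

lemma CircleDeg1Lift.uniformContinuous_of_continuous (f : CircleDeg1Lift) (hf : Continuous f) :
    UniformContinuous f := by
  rw [Metric.uniformContinuous_iff]
  intro ε hε
  obtain ⟨δ, hδ, hfδ⟩ := Metric.uniformContinuousOn_iff.1
    ((isCompact_Icc (a := -1) (b := 2)).uniformContinuousOn_of_continuous hf.continuousOn) ε hε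
  refine ⟨min δ 1, by positivity, fun {x y} hxy => ?_⟩
  have hxy' := abs_lt.1 (lt_of_lt_of_le hxy (min_le_right _ _))
  have hy := Int.floor_le y
  have hy' := Int.lt_floor_add_one y
  -- translating by `⌊y⌋` moves both points into `[-1, 2]`
  have hshift : dist (f x) (f y) = dist (f (x - ⌊y⌋)) (f (y - ⌊y⌋)) := by
    rw [Real.dist_eq, Real.dist_eq, f.map_sub_int, f.map_sub_int, sub_sub_sub_cancel_right]
  rw [hshift]
  refine hfδ _ ⟨by linarith, by linarith⟩ _ ⟨by linarith, by linarith⟩ ?_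
  rw [Real.dist_eq, sub_sub_sub_cancel_right, ← Real.dist_eq]
  exact lt_of_lt_of_le hxy (min_le_left _ _)

namespace GAdmissible

variable {T : (ℝ × ℝ) ≃ₗ[ℝ] ℝ × ℝ} {f : ℝ → ℝ}

lemma exists_apply_phaseVec (h : GAdmissible T f) (φ : ℝ) :
    ∃ r : ℝ, 0 < r ∧ T (phaseVec φ) = r • phaseVec (f φ) :=
  h.2.2.2 φ

def toCircleDeg1Lift (h : GAdmissible T f) : CircleDeg1Lift :=
  ⟨⟨f, h.1⟩, h.2.1⟩

lemma map_add_int (h : GAdmissible T f) (x : ℝ) (m : ℤ) : f (x + m) = f x + m :=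
  h.toCircleDeg1Lift.map_add_int x m

lemma exists_int_of_apply_eq (h : GAdmissible T f) {x y : ℝ} (hxy : f x = f y) :
    ∃ k : ℤ, x = y + 2 * k := by
  obtain ⟨r, hr, hx⟩ := h.exists_apply_phaseVec x
  obtain ⟨s, hs, hy⟩ := h.exists_apply_phaseVec y
  refine exists_int_of_smul_phaseVec_eq hs hr (T.injective ?_)
  rw [map_smul, map_smul, hx, hy, hxy, smul_smul, smul_smul, mul_comm]

lemma strictMono (h : GAdmissible T f) : StrictMono f := by
  refine h.1.strictMono_of_injective fun x y hxy => ?_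
  obtain ⟨k, rfl⟩ := h.exists_int_of_apply_eq hxy
  have hshift := h.map_add_int y (2 * k)
  push_cast at hshift
  have hk : (k : ℝ) = 0 := by linarith
  simp [hk]

lemma surjective (h : GAdmissible T f) : Function.Surjective f := by
  intro ψ
  have hv : T.symm (phaseVec ψ) ≠ 0 := (LinearEquiv.map_ne_zero_iff _).2 (phaseVec_ne_zero ψ)
  obtain ⟨s, hs, φ, hφ⟩ := exists_eq_smul_phaseVec hv
  obtain ⟨r, hr, hTφ⟩ := h.exists_apply_phaseVec φ
  have hψ : (1 : ℝ) • phaseVec ψ = (s * r) • phaseVec (f φ) := by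
    rw [one_smul, ← smul_smul, ← hTφ, ← map_smul, ← hφ, LinearEquiv.apply_symm_apply]
  obtain ⟨k, hk⟩ := exists_int_of_smul_phaseVec_eq one_pos (by positivity) hψ
  refine ⟨φ + (2 * k : ℤ), ?_⟩
  rw [h.map_add_int, hk]
  push_cast
  ring

lemma exists_symm_apply_phaseVec (h : GAdmissible T f) (φ : ℝ) :
    ∃ r : ℝ, 0 < r ∧ T.symm (phaseVec (f φ)) = r • phaseVec φ := by
  obtain ⟨r, hr, hT⟩ := h.exists_apply_phaseVec φ
  refine ⟨r⁻¹, inv_pos.2 hr, ?_⟩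
  rw [T.symm_apply_eq, map_smul, hT, smul_smul, inv_mul_cancel₀ hr.ne', one_smul]

noncomputable def toOrderIso (h : GAdmissible T f) : ℝ ≃o ℝ :=
  StrictMono.orderIsoOfSurjective f h.strictMono h.surjective

lemma uniformContinuous (h : GAdmissible T f) : UniformContinuous f :=
  h.toCircleDeg1Lift.uniformContinuous_of_continuous (h.1.continuous_of_surjective h.surjective)

end GAdmissible

variable {C} {D : Type*} [Category D] [HasZeroObject D] [HasShift D ℤ]
  [Preadditive D] [∀ n : ℤ, (shiftFunctor D n).Additive] [Pretriangulated D]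

lemma StabilityCondition.ext {σ₁ σ₂ : StabilityCondition C} (hZ : σ₁.Z = σ₂.Z)
    (hP : σ₁.P = σ₂.P) : σ₁ = σ₂ := by
  cases σ₁
  cases σ₂
  subst hZ hP
  rfl

section TriangulatedFunctor

variable (G : C ⥤ D) [G.CommShift ℤ] [G.IsTriangulated]

lemma ExtClosure.map {S : Set C} {S' : Set D} (hS : ∀ X ∈ S, G.obj X ∈ S') {E : C}
    (hE : ExtClosure C S E) : ExtClosure D S' (G.obj E) := by
  induction hE with
  | of hE => exact .of (hS _ hE)
  | zero hE => exact .zero (G.map_isZero hE)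
  | iso e _ ih => exact .iso (G.mapIso e) ih
  | ext T hT _ _ ih₁ ih₃ => exact .ext _ (G.map_distinguished T hT) ih₁ ih₃

lemma FiniteLengthQuasiAbelian.of_map {S : Set C} {S' : Set D}
    (hS : ∀ X ∈ S, G.obj X ∈ S') (hG : ∀ X, IsZero (G.obj X) → IsZero X)
    (h : FiniteLengthQuasiAbelian D S') : FiniteLengthQuasiAbelian C S := by
  constructor
  · refine Subrelation.wf (fun {A E} hAE => ?_) (InvImage.wf G.obj h.1)
    obtain ⟨hA, hE, B, f, g, k, hB, hB₀, hT⟩ := hAE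
    exact ⟨hS _ hA, hS _ hE, G.obj B, G.map f, G.map g, _, hS _ hB, fun h₀ => hB₀ (hG B h₀),
      G.map_distinguished _ hT⟩
  · refine Subrelation.wf (fun {B E} hBE => ?_) (InvImage.wf G.obj h.2)
    obtain ⟨hB, hE, A, f, g, k, hA, hA₀, hT⟩ := hBE
    exact ⟨hS _ hB, hS _ hE, G.obj A, G.map f, G.map g, _, hS _ hA, fun h₀ => hA₀ (hG A h₀),
      G.map_distinguished _ hT⟩

def CategoryTheory.Functor.mapHNFiltration {P : ℝ → Set C} {P' : ℝ → Set D}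
    (hP : ∀ φ, ∀ X ∈ P φ, G.obj X ∈ P' φ) (hG : ∀ X, IsZero (G.obj X) → IsZero X) {E : C} (F : HNFiltration C P E) :
    HNFiltration D P' (G.obj E) where
  n := F.n
  npos := F.npos
  phase := F.phase
  phase_anti := F.phase_anti
  obj j := G.obj (F.obj j)
  obj_zero := G.map_isZero F.obj_zero
  obj_last := congrArg G.obj F.obj_last
  A j := G.obj (F.A j)
  A_mem j := hP _ _ (F.A_mem j)
  A_nonzero j h₀ := F.A_nonzero j (hG _ h₀)
  map j := G.map (F.map j)
  distinguished j := by
    obtain ⟨g, h, hT⟩ := F.distinguished j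
    exact ⟨G.map g, _, G.map_distinguished _ hT⟩

end TriangulatedFunctor

def HNFiltration.ofIso {P : ℝ → Set C} {E E' : C} (F : HNFiltration C P E) (e : E ≅ E') :
    HNFiltration C P E' := by
  let obj' : Fin (F.n + 1) → C := fun j => if j = Fin.last F.n then E' else F.obj j
  have hlast : obj' (Fin.last F.n) = E' := if_pos rfl
  let ee : ∀ j, F.obj j ≅ obj' j := fun j =>
    if h : j = Fin.last F.n then
      eqToIso (by rw [h, F.obj_last]) ≪≫ e ≪≫ eqToIso (by rw [h, hlast])
    else eqToIso (if_neg h).symm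
  exact
    { n := F.n, npos := F.npos, phase := F.phase, phase_anti := F.phase_anti
      obj := obj'
      obj_zero := F.obj_zero.of_iso (ee 0).symm
      obj_last := hlast
      A := F.A, A_mem := F.A_mem, A_nonzero := F.A_nonzero
      map := fun j => (ee j.castSucc).inv ≫ F.map j ≫ (ee j.succ).hom
      distinguished := fun j => by
        obtain ⟨g, h, hT⟩ := F.distinguished j
        refine ⟨(ee j.succ).inv ≫ g, h ≫ (ee j.castSucc).hom⟦(1 : ℤ)⟧',
          isomorphic_distinguished _ hT _ ?_⟩
        refine Triangle.isoMk _ _ (ee j.castSucc).symm (ee j.succ).symm (Iso.refl _) ?_ ?_ ?_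
        all_goals simp [Triangle.mk, ← Functor.map_comp] }

def HNFiltration.reindex {P : ℝ → Set C} {E : C} (F : HNFiltration C P E) (g : ℝ ≃o ℝ) :
    HNFiltration C (fun φ => P (g φ)) E where
  n := F.n
  npos := F.npos
  phase j := g.symm (F.phase j)
  phase_anti _ _ hij := g.symm.strictMono (F.phase_anti hij)
  obj := F.obj
  obj_zero := F.obj_zero
  obj_last := F.obj_last
  A := F.A
  A_mem j := by simpa using F.A_mem j
  A_nonzero := F.A_nonzero
  map := F.map
  distinguished := F.distinguished

namespace StabilityCondition

variable {T : (ℝ × ℝ) ≃ₗ[ℝ] ℝ × ℝ} {f : ℝ → ℝ}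

noncomputable def gAct (σ : StabilityCondition C) (h : GAdmissible T f) : StabilityCondition C where
  Z E := Complex.equivRealProdLm.symm (T.symm (Complex.equivRealProdLm (σ.Z E)))
  P φ := σ.P (f φ)
  Z_iso_invariant _ _ e := by rw [σ.Z_iso_invariant e]
  Z_additive T' hT' := by rw [σ.Z_additive T' hT', map_add, map_add, map_add]
  P_isoClosed _ _ _ e hX := σ.P_isoClosed _ e hX
  P_zero_mem _ _ h₀ := σ.P_zero_mem _ _ h₀
  P_phase φ E hE hE₀ := by
    obtain ⟨m, hm, hZ⟩ := σ.P_phase (f φ) E hE hE₀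
    obtain ⟨r, hr, hT⟩ := h.exists_symm_apply_phaseVec φ
    refine ⟨m * r, mul_pos hm hr, Complex.equivRealProdLm.injective ?_⟩
    rw [LinearEquiv.apply_symm_apply, hZ, equivRealProdLm_ofReal_mul_exp, map_smul, hT,
      smul_smul, equivRealProdLm_ofReal_mul_exp]
  P_shift φ E := by rw [h.2.1 φ]; exact σ.P_shift (f φ) E
  hom_vanishing _ _ h₁₂ _ _ hA₁ hA₂ := σ.hom_vanishing (h.strictMono h₁₂) hA₁ hA₂
  HN E hE := ⟨(σ.HN E hE).some.reindex h.toOrderIso⟩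

lemma isGAct_gAct (σ : StabilityCondition C) (h : GAdmissible T f) :
    IsGAct C σ T f (σ.gAct h) :=
  ⟨fun _ => rfl, fun _ => rfl⟩

lemma LocallyFinite.gAct {σ : StabilityCondition C} (hσ : σ.LocallyFinite C)
    (h : GAdmissible T f) : (σ.gAct h).LocallyFinite C := by
  obtain ⟨ε, hε, hσε⟩ := hσ
  obtain ⟨δ, hδ, hfδ⟩ := Metric.uniformContinuous_iff.1 h.uniformContinuous ε hε
  refine ⟨δ, hδ, fun φ => (hσε (f φ)).of_map (𝟭 C) (fun X hX => ?_) fun _ => id⟩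
  refine hX.map (𝟭 C) ?_
  rintro Y ⟨ψ, hψ, hY⟩
  refine ⟨f ψ, ?_, hY⟩
  have hψφ : dist ψ φ < δ := by
    rw [Real.dist_eq, abs_sub_lt_iff]
    constructor <;> linarith [hψ.1, hψ.2]
  have := abs_sub_lt_iff.1 (Real.dist_eq _ _ ▸ hfδ hψφ)
  constructor <;> linarith

variable (Φ : C ≌ D) [Φ.functor.CommShift ℤ] [Φ.inverse.CommShift ℤ]
  [Φ.functor.IsTriangulated] [Φ.inverse.IsTriangulated]

noncomputable def map (σ : StabilityCondition C) : StabilityCondition D where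
  Z Y := σ.Z (Φ.inverse.obj Y)
  P φ := {Y | Φ.inverse.obj Y ∈ σ.P φ}
  Z_iso_invariant _ _ e := σ.Z_iso_invariant (Φ.inverse.mapIso e)
  Z_additive T hT := σ.Z_additive _ (Φ.inverse.map_distinguished T hT)
  P_isoClosed φ _ _ e hY := σ.P_isoClosed φ (Φ.inverse.mapIso e) hY
  P_zero_mem φ _ h₀ := σ.P_zero_mem φ _ (Φ.inverse.map_isZero h₀)
  P_phase φ _ hY hY₀ := σ.P_phase φ _ hY fun h₀ => hY₀ (IsZero.of_full_of_faithful_of_isZero _ _ h₀)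
  P_shift φ Y := by
    refine (σ.P_shift φ _).trans ⟨fun ⟨X, hX, ⟨e⟩⟩ => ?_, fun ⟨X, hX, ⟨e⟩⟩ => ?_⟩
    · refine ⟨Φ.functor.obj X, σ.P_isoClosed φ (Φ.unitIso.app X) hX, ⟨?_⟩⟩
      exact (Φ.counitIso.app Y).symm ≪≫ Φ.functor.mapIso e ≪≫
        (Φ.functor.commShiftIso (1 : ℤ)).app X
    · exact ⟨_, hX, ⟨Φ.inverse.mapIso e ≪≫ (Φ.inverse.commShiftIso (1 : ℤ)).app X⟩⟩
  hom_vanishing _ _ h₁₂ _ _ hA₁ hA₂ g :=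
    Φ.inverse.map_injective ((σ.hom_vanishing h₁₂ hA₁ hA₂ _).trans (Φ.inverse.map_zero _ _).symm)
  HN Y hY := by
    have hY' : ¬ IsZero (Φ.inverse.obj Y) := fun h₀ =>
      hY (IsZero.of_full_of_faithful_of_isZero _ _ h₀)
    exact ⟨((Φ.functor.mapHNFiltration (fun φ X hX => σ.P_isoClosed φ (Φ.unitIso.app X) hX)
      (IsZero.of_full_of_faithful_of_isZero _) (σ.HN _ hY').some).ofIso (Φ.counitIso.app Y))⟩

lemma LocallyFinite.map {σ : StabilityCondition C} (hσ : σ.LocallyFinite C) :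
    (σ.map Φ).LocallyFinite D := by
  obtain ⟨ε, hε, hσε⟩ := hσ
  refine ⟨ε, hε, fun φ => (hσε φ).of_map Φ.inverse (fun _ hY => hY.map Φ.inverse ?_)
    (IsZero.of_full_of_faithful_of_isZero _)⟩
  exact fun _ hX => hX

end StabilityCondition

namespace IsGAct

variable {σ σ₁ σ₂ : StabilityCondition C} {T T₁ T₂ : (ℝ × ℝ) ≃ₗ[ℝ] ℝ × ℝ} {f f₁ f₂ : ℝ → ℝ}

lemma unique (h₁ : IsGAct C σ T f σ₁) (h₂ : IsGAct C σ T f σ₂) : σ₁ = σ₂ :=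
  StabilityCondition.ext (funext fun E => (h₁.1 E).trans (h₂.1 E).symm)
    (funext fun φ => (h₁.2 φ).trans (h₂.2 φ).symm)

lemma eq_of_refl (h : IsGAct C σ (LinearEquiv.refl ℝ (ℝ × ℝ)) id σ₁) : σ₁ = σ :=
  StabilityCondition.ext
    (funext fun E => (h.1 E).trans (Complex.equivRealProdLm.symm_apply_apply _)) (funext h.2)

lemma trans (h₁ : IsGAct C σ T₁ f₁ σ₁) (h₂ : IsGAct C σ₁ T₂ f₂ σ₂) :
    IsGAct C σ (T₂.trans T₁) (f₁ ∘ f₂) σ₂ :=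
  ⟨fun E => by simp [h₁.1, h₂.1], fun φ => by simp [h₁.2, h₂.2]⟩

end IsGAct

namespace IsAutAct

variable {σ σ₁ σ₂ : StabilityCondition C} {Φ Φ₁ Φ₂ : C ≌ C}

lemma unique (h₁ : IsAutAct C σ Φ σ₁) (h₂ : IsAutAct C σ Φ σ₂) : σ₁ = σ₂ :=
  StabilityCondition.ext (funext fun E => (h₁.1 E).trans (h₂.1 E).symm)
    (funext fun φ => Set.ext fun E => (h₁.2 φ E).trans (h₂.2 φ E).symm)

lemma eq_of_refl (h : IsAutAct C σ CategoryTheory.Equivalence.refl σ₁) : σ₁ = σ :=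
  StabilityCondition.ext (funext h.1) (funext fun φ => Set.ext (h.2 φ))

lemma trans (h₁ : IsAutAct C σ Φ₂ σ₁) (h₂ : IsAutAct C σ₁ Φ₁ σ₂) :
    IsAutAct C σ (Φ₂.trans Φ₁) σ₂ :=
  ⟨fun E => (h₂.1 E).trans (h₁.1 _), fun φ E => (h₂.2 φ E).trans (h₁.2 φ _)⟩

lemma comm_isGAct {σ σ₁ σ₂ σ₃ σ₄ : StabilityCondition C} {T : (ℝ × ℝ) ≃ₗ[ℝ] ℝ × ℝ}
    {f : ℝ → ℝ} {Φ : C ≌ C} (h₁ : IsGAct C σ T f σ₁) (h₂ : IsAutAct C σ₁ Φ σ₂)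
    (h₃ : IsAutAct C σ Φ σ₃) (h₄ : IsGAct C σ₃ T f σ₄) : σ₂ = σ₄ :=
  StabilityCondition.ext (funext fun E => by rw [h₂.1, h₁.1, h₄.1, h₃.1])
    (funext fun φ => Set.ext fun E => by rw [h₂.2, h₁.2, h₄.2, h₃.2])

end IsAutAct

lemma StabilityCondition.exists_locallyFinite_isAutAct {σ : StabilityCondition C}
    (hσ : σ.LocallyFinite C) (Φ : C ≌ C) [Φ.functor.CommShift ℤ] [Φ.functor.IsTriangulated] :
    ∃ σ' : StabilityCondition C, σ'.LocallyFinite C ∧ IsAutAct C σ Φ σ' := by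
  let := Φ.commShiftInverse ℤ
  have := Φ.commShift_of_functor ℤ
  have : Φ.inverse.IsTriangulated := Φ.toAdjunction.isTriangulated_rightAdjoint
  exact ⟨σ.map Φ, hσ.map Φ, fun _ => rfl, fun _ _ => Iff.rfl⟩

/-- `Stab(D)` carries a right action of the universal covering group of
`GL⁺(2,ℝ)` and a left action of the group of exact autoequivalences of `D`, and these
two actions commute.  (The actions are characterized by the predicates `IsGAct` and
`IsAutAct`; well-definedness, uniqueness, unit and compatibility laws are stated.) -/
theorem statement6 :
    -- right action of the universal cover of GL⁺(2,ℝ): well-definedness on Stab(D)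
    (∀ σ : StabilityCondition C, σ.LocallyFinite C →
      ∀ (T : (ℝ × ℝ) ≃ₗ[ℝ] ℝ × ℝ) (f : ℝ → ℝ), GAdmissible T f →
        ∃ σ' : StabilityCondition C, σ'.LocallyFinite C ∧ IsGAct C σ T f σ') ∧
    (∀ (σ σ₁ σ₂ : StabilityCondition C) (T : (ℝ × ℝ) ≃ₗ[ℝ] ℝ × ℝ) (f : ℝ → ℝ),
      IsGAct C σ T f σ₁ → IsGAct C σ T f σ₂ → σ₁ = σ₂) ∧
    -- unit law
    (∀ σ σ' : StabilityCondition C,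
      IsGAct C σ (LinearEquiv.refl ℝ (ℝ × ℝ)) id σ' → σ' = σ) ∧
    -- right action compatibility: σ·(g₁g₂) = (σ·g₁)·g₂ where g₁g₂ = (T₁ ∘ T₂, f₁ ∘ f₂)
    (∀ (σ σ₁ σ₂ : StabilityCondition C) (T₁ T₂ : (ℝ × ℝ) ≃ₗ[ℝ] ℝ × ℝ) (f₁ f₂ : ℝ → ℝ),
      GAdmissible T₁ f₁ → GAdmissible T₂ f₂ →
      IsGAct C σ T₁ f₁ σ₁ → IsGAct C σ₁ T₂ f₂ σ₂ →
        IsGAct C σ (T₂.trans T₁) (f₁ ∘ f₂) σ₂) ∧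
    -- left action of exact autoequivalences: well-definedness on Stab(D)
    (∀ σ : StabilityCondition C, σ.LocallyFinite C →
      ∀ (Φ : C ≌ C) [Φ.functor.CommShift ℤ] [Φ.functor.IsTriangulated],
        ∃ σ' : StabilityCondition C, σ'.LocallyFinite C ∧ IsAutAct C σ Φ σ') ∧
    (∀ (σ σ₁ σ₂ : StabilityCondition C) (Φ : C ≌ C),
      IsAutAct C σ Φ σ₁ → IsAutAct C σ Φ σ₂ → σ₁ = σ₂) ∧
    -- unit law
    (∀ σ σ' : StabilityCondition C, IsAutAct C σ (CategoryTheory.Equivalence.refl (C := C)) σ' → σ' = σ) ∧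
    -- left action compatibility: (Φ₁ ∘ Φ₂)(σ) = Φ₁(Φ₂(σ))
    (∀ (σ σ₁ σ₂ : StabilityCondition C) (Φ₁ Φ₂ : C ≌ C),
      IsAutAct C σ Φ₂ σ₁ → IsAutAct C σ₁ Φ₁ σ₂ → IsAutAct C σ (Φ₂.trans Φ₁) σ₂) ∧
    -- the two actions commute
    (∀ (σ σ₁ σ₂ σ₃ σ₄ : StabilityCondition C) (T : (ℝ × ℝ) ≃ₗ[ℝ] ℝ × ℝ) (f : ℝ → ℝ)
      (Φ : C ≌ C),
      IsGAct C σ T f σ₁ → IsAutAct C σ₁ Φ σ₂ →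
      IsAutAct C σ Φ σ₃ → IsGAct C σ₃ T f σ₄ → σ₂ = σ₄) := by
  refine ⟨fun σ hσ T f h => ⟨σ.gAct h, hσ.gAct h, σ.isGAct_gAct h⟩,
    fun _ _ _ _ _ => IsGAct.unique, fun _ _ => IsGAct.eq_of_refl,
    fun _ _ _ _ _ _ _ _ _ => IsGAct.trans,
    fun σ hσ Φ _ _ => σ.exists_locallyFinite_isAutAct hσ Φ,
    fun _ _ _ _ => IsAutAct.unique, fun _ _ => IsAutAct.eq_of_refl,
    fun _ _ _ _ _ => IsAutAct.trans,
    fun _ _ _ _ _ _ _ _ => IsAutAct.comm_isGAct⟩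
end

section
/- Let A be an abelian category of finite length, i.e. every object of A admits a finite composition series. Then every stability function Z : K(A) → ℂ on A has the Harder–Narasimhan property. -/
/-!
Stability functions on an abelian category (Bridgeland / Rudakov).  A group
homomorphism `K(A) → ℂ` is encoded as an isomorphism-invariant function on objects
which is additive on short exact sequences.
-/

open CategoryTheory CategoryTheory.Limits

universe v u

variable (A : Type u) [Category.{v} A] [Abelian A]

/-- A stability function on the abelian category `A`: a group homomorphism
`Z : K(A) → ℂ` such that every nonzero `E` satisfies `Z(E) = m·exp(iπφ)` with `m > 0`
and `0 < φ ≤ 1`. -/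
def IsStabilityFunction (Z : A → ℂ) : Prop :=
  (∀ ⦃X Y : A⦄, (X ≅ Y) → Z X = Z Y) ∧
  (∀ S : ShortComplex A, S.ShortExact → Z S.X₂ = Z S.X₁ + Z S.X₃) ∧
  (∀ E : A, ¬ IsZero E → ∃ m φ : ℝ, 0 < m ∧ 0 < φ ∧ φ ≤ 1 ∧
    Z E = (m : ℂ) * Complex.exp ((Real.pi * φ : ℝ) * Complex.I))

/-- The phase `φ(E) ∈ (0,1]` of an object with `Z(E) = m·exp(iπφ(E))`, recovered as
`(1/π)·arg Z(E)`. -/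
noncomputable def phaseOf (z : ℂ) : ℝ := z.arg / Real.pi

/-- A nonzero object `E` is `Z`-semistable if every nonzero subobject `A' ⊆ E` satisfies
`φ(A') ≤ φ(E)`. -/
def ZSemistable (Z : A → ℂ) (E : A) : Prop :=
  ¬ IsZero E ∧ ∀ P : Subobject E, ¬ IsZero (P : A) →
    phaseOf (Z (P : A)) ≤ phaseOf (Z E)

/-- `A` is a finite length abelian category: every object admits a finite composition
series, i.e. a finite chain of subobjects `⊥ = c₀ ≤ c₁ ≤ ⋯ ≤ c_n = ⊤` with simple
successive quotients. -/
def FiniteLengthCategory : Prop :=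
  ∀ X : A, ∃ (n : ℕ) (c : Fin (n + 1) → Subobject X),
    c 0 = ⊥ ∧ c (Fin.last n) = ⊤ ∧
    ∃ hle : ∀ j : Fin n, c j.castSucc ≤ c j.succ,
      ∀ j : Fin n, c j.castSucc ≠ c j.succ ∧
        Simple (cokernel (Subobject.ofLE _ _ (hle j)))

/-- `E` admits a Harder–Narasimhan filtration with respect to `Z`: a finite chain of
subobjects `⊥ = c₀ ⊆ c₁ ⊆ ⋯ ⊆ c_n = ⊤` of `E` whose successive quotients
`F_j = c_j/c_{j−1}` are `Z`-semistable with `φ(F₁) > φ(F₂) > ⋯ > φ(F_n)`. -/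
def HasHNFiltration (Z : A → ℂ) (E : A) : Prop :=
  ∃ (n : ℕ) (c : Fin (n + 1) → Subobject E),
    c 0 = ⊥ ∧ c (Fin.last n) = ⊤ ∧
    ∃ hle : ∀ j : Fin n, c j.castSucc ≤ c j.succ,
      (∀ j : Fin n, ZSemistable A Z (cokernel (Subobject.ofLE _ _ (hle j)))) ∧
      ∀ ⦃i j : Fin n⦄, i < j →
        phaseOf (Z (cokernel (Subobject.ofLE _ _ (hle j)))) <
          phaseOf (Z (cokernel (Subobject.ofLE _ _ (hle i))))

/-!
Fix a composition series `c` of `E`. For a subobject `P`, each step of the induced filtration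
`P ⊓ c j` of `P` is either trivial or has quotient `c (j + 1) / c j`, so `Z P` is `Z ⊥` plus the
sum of `Z` over a set of composition factors of `c`. Hence `Z` takes finitely many values on
`Subobject E`, and the set of such factors grows strictly along a strict inclusion, which gives
the ascending chain condition. The filtration is then built upwards: above `P`, take the largest
`B` for which `Z B - Z P` has maximal argument. Then `B / P` is semistable, and since arguments
in the upper half plane obey the see-saw inequality, the next factor has strictly smaller phase.
-/

lemma Fin.sum_univ_succ_sub_castSucc {M : Type*} [AddCommGroup M] :
    ∀ {n : ℕ} (f : Fin (n + 1) → M),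
      ∑ i : Fin n, (f i.succ - f i.castSucc) = f (Fin.last n) - f 0
  | 0, f => by simp
  | n + 1, f => by
    have ih := Fin.sum_univ_succ_sub_castSucc (f ∘ Fin.castSucc)
    simp only [Function.comp_apply, ← Fin.succ_castSucc] at ih
    rw [Fin.sum_univ_castSucc, ih, Fin.succ_last, Fin.castSucc_zero]
    abel

namespace Complex

lemma arg_pos_iff {z : ℂ} : 0 < arg z ↔ 0 ≤ z.im ∧ (z.im = 0 → z.re < 0) := by
  rw [lt_iff_le_and_ne, ne_comm, arg_nonneg_iff, Ne, arg_eq_zero_iff]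
  grind

lemma arg_add_pos {a b : ℂ} (ha : 0 < arg a) (hb : 0 < arg b) : 0 < arg (a + b) := by
  rw [arg_pos_iff] at *
  simp only [add_im, add_re]
  grind

lemma re_mul_im_sub_im_mul_re (a b : ℂ) :
    a.re * b.im - a.im * b.re = ‖a‖ * ‖b‖ * Real.sin (arg b - arg a) := by
  rw [Real.sin_sub, ← norm_mul_cos_arg a, ← norm_mul_sin_arg a, ← norm_mul_cos_arg b,
    ← norm_mul_sin_arg b]
  ring

lemma arg_le_arg_iff_of_arg_pos {a b : ℂ} (ha : 0 < arg a) (hb : 0 < arg b) :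
    arg a ≤ arg b ↔ 0 ≤ a.re * b.im - a.im * b.re := by
  have ha0 : 0 < ‖a‖ := norm_pos_iff.2 (by rintro rfl; simp at ha)
  have hb0 : 0 < ‖b‖ := norm_pos_iff.2 (by rintro rfl; simp at hb)
  rw [re_mul_im_sub_im_mul_re, mul_nonneg_iff_of_pos_left (by positivity)]
  have := arg_le_pi a
  have := arg_le_pi b
  constructor
  · intro h
    exact Real.sin_nonneg_of_nonneg_of_le_pi (by linarith) (by linarith)
  · intro h
    by_contra! hlt
    have hsin := Real.sin_neg_of_neg_of_neg_pi_lt (sub_neg.2 hlt) (by linarith)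
    linarith

lemma arg_le_arg_add {a b : ℂ} (ha : 0 < arg a) (hb : 0 < arg b) (h : arg a ≤ arg b) :
    arg a ≤ arg (a + b) := by
  rw [arg_le_arg_iff_of_arg_pos ha hb] at h
  rw [arg_le_arg_iff_of_arg_pos ha (arg_add_pos ha hb), add_re, add_im]
  linarith

end Complex

open Complex

section HarderNarasimhan

variable {L : Type*} [PartialOrder L] (z : L → ℂ)

noncomputable def stepArg {k : ℕ} (d : Fin (k + 1) → L) (j : Fin k) : ℝ :=
  arg (z (d j.succ) - z (d j.castSucc))

structure IsHNChain {k : ℕ} (d : Fin (k + 1) → L) : Prop where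
  strictMono : StrictMono d
  arg_le_stepArg : ∀ j R, d j.castSucc < R → R ≤ d j.succ →
    arg (z R - z (d j.castSucc)) ≤ stepArg z d j
  strictAnti : StrictAnti (stepArg z d)

variable {z}

lemma isHNChain_pair [OrderTop L] {P : L} (hP : P < ⊤)
    (hss : ∀ R, P < R → arg (z R - z P) ≤ arg (z ⊤ - z P)) :
    IsHNChain z ![P, ⊤] where
  strictMono := by simpa [strictMono_vecCons] using hP
  arg_le_stepArg j R hR _ := by
    fin_cases j
    exact hss R hR
  strictAnti := Subsingleton.strictAnti _

lemma IsHNChain.cons {k : ℕ} {d : Fin (k + 2) → L} (hd : IsHNChain z d) {P : L} (hP : P < d 0)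
    (hss : ∀ R, P < R → R ≤ d 0 → arg (z R - z P) ≤ arg (z (d 0) - z P))
    (hlt : stepArg z d 0 < arg (z (d 0) - z P)) :
    IsHNChain z (Matrix.vecCons P d) := by
  have hstep : stepArg z (Matrix.vecCons P d) =
      Matrix.vecCons (arg (z (d 0) - z P)) (stepArg z d) := by
    ext j
    cases j using Fin.cases <;> simp [stepArg]
  refine ⟨strictMono_vecCons.2 ⟨hP, hd.strictMono⟩, fun j R => ?_, ?_⟩
  · rw [hstep]
    cases j using Fin.cases with
    | zero => simpa using hss R
    | succ j => simpa [← Fin.succ_castSucc] using hd.arg_le_stepArg j R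
  · rw [hstep]
    exact strictAnti_vecCons.2 ⟨hlt, hd.strictAnti⟩

lemma exists_maximal_destabilizing [OrderTop L] [WellFoundedGT L]
    (hfin : ∀ P, {x | ∃ R, P < R ∧ arg (z R - z P) = x}.Finite) {P : L} (hP : P < ⊤) :
    ∃ B, P < B ∧ (∀ R, P < R → arg (z R - z P) ≤ arg (z B - z P)) ∧
      ∀ R, B < R → arg (z R - z P) < arg (z B - z P) := by
  obtain ⟨_, ⟨R₀, hR₀, rfl⟩, hmax⟩ :=
    Set.exists_max_image _ id (hfin P) ⟨_, ⊤, hP, rfl⟩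
  obtain ⟨B, ⟨hPB, hB⟩, hBmax⟩ := WellFounded.has_min wellFounded_gt
    {R | P < R ∧ arg (z R - z P) = arg (z R₀ - z P)} ⟨R₀, hR₀, rfl⟩
  refine ⟨B, hPB, fun R hR => hB ▸ hmax _ ⟨R, hR, rfl⟩, fun R hBR => ?_⟩
  rw [hB]
  exact (hmax _ ⟨R, hPB.trans hBR, rfl⟩).lt_of_ne fun h => hBmax R ⟨hPB.trans hBR, h⟩ hBR

theorem exists_isHNChain [OrderTop L] [WellFoundedGT L]
    (hpos : ∀ P Q, P < Q → 0 < arg (z Q - z P))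
    (hfin : ∀ P, {x | ∃ R, P < R ∧ arg (z R - z P) = x}.Finite) (P : L) (hP : P < ⊤) :
    ∃ (k : ℕ) (d : Fin (k + 1) → L), d 0 = P ∧ d (Fin.last k) = ⊤ ∧ IsHNChain z d := by
  induction P using WellFoundedGT.induction with
  | _ P ih =>
  obtain ⟨B, hPB, hss, hmax⟩ := exists_maximal_destabilizing hfin hP
  obtain rfl | hB := eq_or_lt_of_le (le_top : B ≤ ⊤)
  · exact ⟨1, ![P, ⊤], rfl, rfl, isHNChain_pair hP hss⟩
  obtain ⟨k, d, rfl, hlast, hd⟩ := ih B hPB hB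
  obtain _ | k := k
  · exact absurd hlast hB.ne
  refine ⟨k + 2, Matrix.vecCons P d, rfl, hlast, hd.cons hPB (fun R hR _ => hss R hR) ?_⟩
  -- otherwise the see-saw inequality would make `d 1` a larger subobject of maximal phase
  by_contra! hle
  have h01 : d 0 < d 1 := hd.strictMono Fin.zero_lt_one
  have := arg_le_arg_add (hpos _ _ hPB) (hpos _ _ h01) hle
  rw [sub_add_sub_cancel'] at this
  exact (hmax _ h01).not_ge this

end HarderNarasimhan

section Subobjects

variable {A}

lemma shortExact_cokernel {X Y : A} (f : X ⟶ Y) [Mono f] :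
    (ShortComplex.mk f (cokernel.π f) (cokernel.condition f)).ShortExact :=
  { exact := ShortComplex.exact_cokernel f }

lemma Subobject.not_isZero_cokernel_ofLE {E : A} {P Q : Subobject E} (h : P < Q) :
    ¬ IsZero (cokernel (Subobject.ofLE P Q h.le)) := by
  intro hzero
  have := Preadditive.epi_of_isZero_cokernel _ hzero
  have := isIso_of_mono_of_epi (Subobject.ofLE P Q h.le)
  exact h.ne (le_antisymm h.le (Subobject.le_of_comm (inv (Subobject.ofLE P Q h.le)) (by simp)))

lemma Subobject.le_of_ofLE_comp_cokernel_π_eq_zero {E : A} {V W X : Subobject E} (hVX : V ≤ X)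
    (hWX : W ≤ X) (h : Subobject.ofLE V X hVX ≫ cokernel.π (Subobject.ofLE W X hWX) = 0) :
    V ≤ W :=
  Subobject.le_of_comm (Abelian.monoLift _ _ h) (by
    rw [← Subobject.ofLE_arrow hWX, ← Category.assoc, Abelian.monoLift_comp,
      Subobject.ofLE_arrow])

lemma Subobject.ofLE_inf_comp_cokernel_π {E : A} {V W X : Subobject E} (hVX : V ≤ X)
    (hWX : W ≤ X) :
    Subobject.ofLE (V ⊓ W) V inf_le_left ≫
      Subobject.ofLE V X hVX ≫ cokernel.π (Subobject.ofLE W X hWX) = 0 := by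
  rw [← Category.assoc, Subobject.ofLE_comp_ofLE,
    ← Subobject.ofLE_comp_ofLE _ W _ inf_le_right hWX, Category.assoc, cokernel.condition,
    comp_zero]

lemma Subobject.exact_ofLE_inf {E : A} {V W X : Subobject E} (hVX : V ≤ X) (hWX : W ≤ X) :
    (ShortComplex.mk _ _ (Subobject.ofLE_inf_comp_cokernel_π hVX hWX)).Exact := by
  refine ShortComplex.exact_of_f_is_kernel _ (KernelFork.IsLimit.ofι' _ _ fun {Y} t ht => ?_)
  rw [← Category.assoc] at ht
  have hW : W.Factors (t ≫ V.arrow) := by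
    rw [← Subobject.ofLE_arrow hVX, ← Category.assoc, ← Abelian.monoLift_comp _ _ ht,
      Category.assoc, Subobject.ofLE_arrow]
    exact Subobject.factors_comp_arrow _
  have hVW : (V ⊓ W).Factors (t ≫ V.arrow) :=
    (Subobject.inf_factors _).2 ⟨(Subobject.factors_iff _ _).2 ⟨t, rfl⟩, hW⟩
  exact ⟨Subobject.factorThru _ _ hVW, by simp [← cancel_mono V.arrow]⟩

lemma shortExact_pullback_cokernel {X Y : A} (f : X ⟶ Y) [Mono f] (S : Subobject (cokernel f)) :
    (ShortComplex.mk (pullback.lift 0 f (by simp)) (pullback.fst S.arrow (cokernel.π f))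
      (pullback.lift_fst _ _ _)).ShortExact := by
  have : Mono (pullback.lift 0 f (by simp) ≫ pullback.snd S.arrow (cokernel.π f)) := by
    rw [pullback.lift_snd]; infer_instance
  have := mono_of_mono (pullback.lift 0 f _) (pullback.snd S.arrow (cokernel.π f))
  refine ShortComplex.ShortExact.mk' (ShortComplex.exact_of_f_is_kernel _ ?_) this inferInstance
  refine KernelFork.IsLimit.ofι' _ _ fun {T} t ht => ?_
  have ht' : (t ≫ pullback.snd S.arrow (cokernel.π f)) ≫ cokernel.π f = 0 := by
    rw [Category.assoc, ← pullback.condition, ← Category.assoc, ht, zero_comp]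
  refine ⟨Abelian.monoLift f _ ht', pullback.hom_ext ?_ ?_⟩
  · rw [Category.assoc, pullback.lift_fst, comp_zero]
    exact ht.symm
  · rw [Category.assoc, pullback.lift_snd, Abelian.monoLift_comp]

end Subobjects

namespace IsStabilityFunction

variable {A} {Z : A → ℂ}

lemma arg_pos (hZ : IsStabilityFunction A Z) {X : A} (hX : ¬ IsZero X) : 0 < arg (Z X) := by
  obtain ⟨m, φ, hm, hφ₀, hφ₁, hZX⟩ := hZ.2.2 X hX
  have hπ := Real.pi_pos
  rw [hZX, arg_real_mul _ hm, exp_mul_I, arg_cos_add_sin_mul_I ⟨by nlinarith, by nlinarith⟩]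
  positivity

lemma map_cokernel_ofLE (hZ : IsStabilityFunction A Z) {E : A} {P Q : Subobject E} (h : P ≤ Q) :
    Z (cokernel (Subobject.ofLE P Q h)) = Z Q - Z P :=
  eq_sub_of_add_eq' (hZ.2.1 _ (shortExact_cokernel _)).symm

lemma arg_sub_pos (hZ : IsStabilityFunction A Z) {E : A} {P Q : Subobject E} (h : P < Q) :
    0 < arg (Z Q - Z P) :=
  hZ.map_cokernel_ofLE h.le ▸ hZ.arg_pos (Subobject.not_isZero_cokernel_ofLE h)

lemma sub_inf_eq (hZ : IsStabilityFunction A Z) {E : A} {V W X : Subobject E} (hVX : V ≤ X)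
    (hWX : W ≤ X) [Simple (cokernel (Subobject.ofLE W X hWX))] (hVW : ¬ V ≤ W) :
    Z V - Z (V ⊓ W : Subobject E) = Z X - Z W := by
  have : Epi (Subobject.ofLE V X hVX ≫ cokernel.π (Subobject.ofLE W X hWX)) :=
    epi_of_nonzero_to_simple fun h =>
      hVW (Subobject.le_of_ofLE_comp_cokernel_π_eq_zero hVX hWX h)
  rw [hZ.2.1 _ ⟨Subobject.exact_ofLE_inf hVX hWX⟩, ← hZ.map_cokernel_ofLE hWX]
  ring

lemma exists_eq_sub_of_subobject_cokernel (hZ : IsStabilityFunction A Z) {E : A}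
    {P Q : Subobject E} (h : P ≤ Q) (S : Subobject (cokernel (Subobject.ofLE P Q h)))
    (hS : ¬ IsZero (S : A)) : ∃ R, P < R ∧ R ≤ Q ∧ Z S = Z R - Z P := by
  set g := pullback.snd S.arrow (cokernel.π (Subobject.ofLE P Q h)) ≫ Q.arrow
  have hZS : Z S = Z (Subobject.mk g : A) - Z P := by
    rw [hZ.1 (Subobject.underlyingIso g), hZ.2.1 _ (shortExact_pullback_cokernel _ S)]
    ring
  have hPR : P ≤ Subobject.mk g :=
    Subobject.le_mk_of_comm (pullback.lift 0 (Subobject.ofLE P Q h) (by simp)) (by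
      rw [← Category.assoc, pullback.lift_snd, Subobject.ofLE_arrow])
  refine ⟨_, hPR.lt_of_ne fun hPR => ?_, Subobject.mk_le_of_comm _ rfl, hZS⟩
  have := (hZ.arg_pos hS).ne'
  rw [hZS, ← hPR, sub_self, arg_zero] at this
  exact this rfl

lemma hasHNFiltration_of_isHNChain (hZ : IsStabilityFunction A Z) {E : A} {k : ℕ}
    {d : Fin (k + 1) → Subobject E} (h0 : d 0 = ⊥) (hlast : d (Fin.last k) = ⊤)
    (hd : IsHNChain (fun P : Subobject E => Z P) d) : HasHNFiltration A Z E := by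
  have hlt (j : Fin k) : d j.castSucc < d j.succ := hd.strictMono j.castSucc_lt_succ
  have hphase (j : Fin k) : phaseOf (Z (cokernel (Subobject.ofLE _ _ (hlt j).le))) =
      stepArg (fun P : Subobject E => Z P) d j / Real.pi := by
    rw [phaseOf, hZ.map_cokernel_ofLE]
    rfl
  refine ⟨k, d, h0, hlast, fun j => (hlt j).le,
    fun j => ⟨Subobject.not_isZero_cokernel_ofLE (hlt j), fun S hS => ?_⟩,
    fun i j hij => ?_⟩
  · obtain ⟨R, hPR, hRQ, hZS⟩ := hZ.exists_eq_sub_of_subobject_cokernel _ S hS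
    rw [hphase, phaseOf, hZS]
    exact div_le_div_of_nonneg_right (hd.arg_le_stepArg j R hPR hRQ) Real.pi_pos.le
  · rw [hphase, hphase]
    exact div_lt_div_of_pos_right (hd.strictAnti hij) Real.pi_pos

end IsStabilityFunction

section CompositionSeries

variable {A} {E : A} {n : ℕ}

structure IsCompositionSeries (c : Fin (n + 1) → Subobject E) : Prop where
  zero : c 0 = ⊥
  last : c (Fin.last n) = ⊤
  le : ∀ j : Fin n, c j.castSucc ≤ c j.succ
  simple : ∀ j : Fin n, Simple (cokernel (Subobject.ofLE _ _ (le j)))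

lemma FiniteLengthCategory.exists_isCompositionSeries (hfl : FiniteLengthCategory A) (E : A) :
    ∃ (n : ℕ) (c : Fin (n + 1) → Subobject E), IsCompositionSeries c := by
  obtain ⟨n, c, h0, hlast, hle, hc⟩ := hfl E
  exact ⟨n, c, h0, hlast, hle, fun j => (hc j).2⟩

open scoped Classical in
noncomputable def jumpSet (c : Fin (n + 1) → Subobject E) (P : Subobject E) : Finset (Fin n) :=
  {j | P ⊓ c j.castSucc ≠ P ⊓ c j.succ}

lemma mem_jumpSet {c : Fin (n + 1) → Subobject E} {P : Subobject E} {j : Fin n} :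
    j ∈ jumpSet c P ↔ P ⊓ c j.castSucc ≠ P ⊓ c j.succ := by
  simp [jumpSet]

lemma monotone_jumpSet {c : Fin (n + 1) → Subobject E}
    (hle : ∀ j : Fin n, c j.castSucc ≤ c j.succ) : Monotone (jumpSet c) := by
  intro P Q hPQ j
  simp only [mem_jumpSet]
  refine mt fun hQ => le_antisymm (inf_le_inf_left _ (hle j)) (le_inf inf_le_left ?_)
  calc P ⊓ c j.succ ≤ Q ⊓ c j.succ := inf_le_inf_right _ hPQ
    _ = Q ⊓ c j.castSucc := hQ.symm
    _ ≤ c j.castSucc := inf_le_right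

namespace IsCompositionSeries

variable {Z : A → ℂ} {c : Fin (n + 1) → Subobject E}

lemma sub_eq_ite (hc : IsCompositionSeries c) (hZ : IsStabilityFunction A Z) (P : Subobject E)
    (j : Fin n) :
    Z (P ⊓ c j.succ : Subobject E) - Z (P ⊓ c j.castSucc : Subobject E) =
      if j ∈ jumpSet c P then Z (c j.succ) - Z (c j.castSucc) else 0 := by
  split_ifs with hj
  · have := hc.simple j
    have hinf : P ⊓ c j.succ ⊓ c j.castSucc = P ⊓ c j.castSucc := by
      rw [inf_assoc, inf_eq_right.2 (hc.le j)]
    rw [← hinf]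
    refine hZ.sub_inf_eq inf_le_right (hc.le j) fun hle => mem_jumpSet.1 hj ?_
    exact le_antisymm (inf_le_inf_left _ (hc.le j)) (le_inf inf_le_left hle)
  · rw [not_not.1 (mem_jumpSet.not.1 hj), sub_self]

lemma map_eq_add_sum_jumpSet (hc : IsCompositionSeries c) (hZ : IsStabilityFunction A Z)
    (P : Subobject E) :
    Z P = Z (⊥ : Subobject E) + ∑ j ∈ jumpSet c P, (Z (c j.succ) - Z (c j.castSucc)) := by
  have key := Fin.sum_univ_succ_sub_castSucc fun i => Z (P ⊓ c i : Subobject E)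
  rw [hc.zero, hc.last, inf_top_eq, inf_bot_eq,
    Finset.sum_congr rfl fun j _ => hc.sub_eq_ite hZ P j, Finset.sum_ite_mem,
    Finset.univ_inter] at key
  rw [key, add_sub_cancel]

lemma strictMono_jumpSet (hc : IsCompositionSeries c) (hZ : IsStabilityFunction A Z) :
    StrictMono (jumpSet c) := by
  intro P Q hPQ
  refine (monotone_jumpSet hc.le hPQ.le).lt_of_ne fun h => ?_
  have := hZ.arg_sub_pos hPQ
  rw [hc.map_eq_add_sum_jumpSet hZ P, hc.map_eq_add_sum_jumpSet hZ Q, h, sub_self,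
    arg_zero] at this
  exact this.false

lemma wellFoundedGT (hc : IsCompositionSeries c) (hZ : IsStabilityFunction A Z) :
    WellFoundedGT (Subobject E) :=
  (hc.strictMono_jumpSet hZ).wellFoundedGT

lemma finite_arg_sub (hc : IsCompositionSeries c) (hZ : IsStabilityFunction A Z)
    (P : Subobject E) : {x | ∃ R, P < R ∧ arg (Z R - Z P) = x}.Finite := by
  refine (Set.finite_range fun T : Finset (Fin n) =>
    arg (Z (⊥ : Subobject E) + ∑ j ∈ T, (Z (c j.succ) - Z (c j.castSucc)) - Z P)).subset ?_
  rintro _ ⟨R, -, rfl⟩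
  exact ⟨jumpSet c R, by rw [hc.map_eq_add_sum_jumpSet hZ R]⟩

end IsCompositionSeries

end CompositionSeries

/-- on an abelian category of finite length, every stability function has
the Harder–Narasimhan property. -/
theorem statement10 (hfl : FiniteLengthCategory A) (Z : A → ℂ)
    (hZ : IsStabilityFunction A Z) :
    ∀ E : A, ¬ IsZero E → HasHNFiltration A Z E := by
  intro E hE
  obtain ⟨n, c, hc⟩ := hfl.exists_isCompositionSeries E
  have := hc.wellFoundedGT hZ
  have := Subobject.nontrivial_of_not_isZero hE
  obtain ⟨k, d, h0, hlast, hd⟩ :=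
    exists_isHNChain (fun _ _ => hZ.arg_sub_pos) (hc.finite_arg_sub hZ) ⊥ bot_lt_top
  exact hZ.hasHNFiltration_of_isHNChain h0 hlast hd
end
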